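/- arXiv:1611.06626 — 4 statements merged into one kernel-verified Lean document; each statement's English description precedes it below -/
import Mathlib

section
/- Let π be a continuous piecewise linear minimal valid function, and let π̄ : ℝ → ℝ be a Lipschitz continuous function such that π̄(0) = 0, π̄(f) = 0, π̄(x) + π̄(y) = π̄(x+y) for all (x,y) ∈ E(π), and π̄(x + t) = π̄(x) for all x ∈ ℝ and t ∈ ℤ. Then there exists ε > 0 such that both π + ε·π̄ and π − ε·π̄ are minimal valid functions. -/
/-- A finite-support function `y : ℝ → ℕ` is feasible if `∑ r, r·y(r) − f ∈ ℤ`. -/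
def Feasible (f : ℝ) (y : ℝ →₀ ℕ) : Prop :=
  ∃ z : ℤ, (∑ r ∈ y.support, r * (y r : ℝ)) - f = (z : ℝ)

/-- `π` is a valid function: nonnegative, and `∑ r, π(r)·y(r) ≥ 1` for every feasible `y`. -/
def Valid (f : ℝ) (π : ℝ → ℝ) : Prop :=
  (∀ x, 0 ≤ π x) ∧
    ∀ y : ℝ →₀ ℕ, Feasible f y → 1 ≤ ∑ r ∈ y.support, π r * (y r : ℝ)

/-- A valid function is minimal if no other valid function is pointwise ≤ it. -/
def MinimalValid (f : ℝ) (π : ℝ → ℝ) : Prop :=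
  Valid f π ∧ ¬ ∃ π' : ℝ → ℝ, Valid f π' ∧ (∀ x, π' x ≤ π x) ∧ π' ≠ π

/-- `P(π)`: the set of feasible `y` with `∑ r, π(r)·y(r) = 1`. -/
def Pset (f : ℝ) (π : ℝ → ℝ) : Set (ℝ →₀ ℕ) :=
  {y | Feasible f y ∧ ∑ r ∈ y.support, π r * (y r : ℝ) = 1}

/-- `E(π) = {(x,y) : π(x) + π(y) = π(x+y)}`. -/
def Eset (π : ℝ → ℝ) : Set (ℝ × ℝ) :=
  {p | π p.1 + π p.2 = π (p.1 + p.2)}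

/-- A valid function `π` is a facet if every valid `π'` with `P(π) ⊆ P(π')` equals `π`. -/
def IsFacet (f : ℝ) (π : ℝ → ℝ) : Prop :=
  Valid f π ∧ ∀ π' : ℝ → ℝ, Valid f π' → Pset f π ⊆ Pset f π' → π' = π

/-- A valid function `π` is a weak facet if every valid `π'` with `P(π) ⊆ P(π')`
has `P(π) = P(π')`. -/
def IsWeakFacet (f : ℝ) (π : ℝ → ℝ) : Prop :=
  Valid f π ∧ ∀ π' : ℝ → ℝ, Valid f π' → Pset f π ⊆ Pset f π' → Pset f π = Pset f π'

/-- A valid function `π` is extreme if whenever `π = (π¹ + π²)/2` with `π¹, π²` valid,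
then `π¹ = π² = π`. -/
def ExtremeFunc (f : ℝ) (π : ℝ → ℝ) : Prop :=
  Valid f π ∧ ∀ π₁ π₂ : ℝ → ℝ, Valid f π₁ → Valid f π₂ →
    (∀ x, π x = (π₁ x + π₂ x) / 2) → π₁ = π ∧ π₂ = π

/-- `π` is piecewise linear: there is a closed, discrete set `B ⊆ ℝ` of breakpoints
such that `π` is affine on each connected component of `ℝ \ B`. -/
def PiecewiseLinear (π : ℝ → ℝ) : Prop :=
  ∃ B : Set ℝ, IsClosed B ∧
    (∀ x ∈ B, ∃ ε > (0 : ℝ), ∀ y ∈ B, |y - x| < ε → y = x) ∧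
    (∀ x ∉ B, ∃ a b : ℝ, ∀ z ∈ connectedComponentIn Bᶜ x, π z = a * z + b)

/-- `π` is continuous piecewise linear. -/
def ContPiecewiseLinear (π : ℝ → ℝ) : Prop :=
  PiecewiseLinear π ∧ Continuous π

/-!
By the Gomory–Johnson characterization, a function is minimal valid as soon as it is bounded
below, vanishes at `0`, is subadditive, `1`-periodic and satisfies `π x + π (f - x) = 1`, and a
minimal valid function has all these properties. Adding `±ε π̄` preserves all of them except
possibly subadditivity, which survives once the additivity slack
`Δπ̄ (x, y) = π̄ x + π̄ y - π̄ (x + y)` is bounded by a multiple of `Δπ` everywhere. By periodicity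
it suffices to bound it on `[0, 1]²`, which is covered by finitely many polygons
`{x ∈ I₁, y ∈ I₂, x + y ∈ I₃}` on which `Δπ` is affine and nonnegative. On such a polygon `Δπ̄`
is Lipschitz and vanishes where `Δπ` does; writing a point as a convex combination of vertices
and moving the weight of the vertices where `Δπ > 0` to a vertex where `Δπ = 0` shows that
its distance to the zero set of `Δπ` is at most a constant times `Δπ`.
-/

open scoped NNReal
open Finsupp Function Set Filter Topology Asymptotics

namespace Finsupp

variable {α : Type*} {v w : α → ℝ}

lemma sum_support_mul_eq_linearCombination (v : α → ℝ) (y : α →₀ ℕ) :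
    ∑ r ∈ y.support, v r * (y r : ℝ) = linearCombination ℕ v y := by
  simp [linearCombination_apply, Finsupp.sum, nsmul_eq_mul, mul_comm]

lemma linearCombination_nonneg (hv : ∀ r, 0 ≤ v r) (y : α →₀ ℕ) :
    0 ≤ linearCombination ℕ v y := by
  rw [← sum_support_mul_eq_linearCombination]
  exact Finset.sum_nonneg fun r _ => mul_nonneg (hv r) (Nat.cast_nonneg _)

lemma linearCombination_mono (y : α →₀ ℕ) (h : ∀ r ∈ y.support, v r ≤ w r) :
    linearCombination ℕ v y ≤ linearCombination ℕ w y := by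
  simp only [← sum_support_mul_eq_linearCombination]
  exact Finset.sum_le_sum fun r hr => mul_le_mul_of_nonneg_right (h r hr) (Nat.cast_nonneg _)

lemma linearCombination_congr (y : α →₀ ℕ) (h : ∀ r ∈ y.support, v r = w r) :
    linearCombination ℕ v y = linearCombination ℕ w y :=
  le_antisymm (linearCombination_mono y fun r hr => (h r hr).le)
    (linearCombination_mono y fun r hr => (h r hr).ge)

lemma linearCombination_div (y : α →₀ ℕ) (s : ℝ) :
    linearCombination ℕ (fun r => v r / s) y = linearCombination ℕ v y / s := by
  simp only [← sum_support_mul_eq_linearCombination, Finset.sum_div, div_mul_eq_mul_div]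

end Finsupp

section Characterization

variable {f : ℝ} {π g : ℝ → ℝ}

lemma feasible_iff {y : ℝ →₀ ℕ} :
    Feasible f y ↔ ∃ z : ℤ, linearCombination ℕ id y - f = z := by
  rw [Feasible, ← sum_support_mul_eq_linearCombination]; rfl

lemma valid_iff :
    Valid f π ↔ (∀ x, 0 ≤ π x) ∧ ∀ y, Feasible f y → 1 ≤ linearCombination ℕ π y := by
  simp only [Valid, sum_support_mul_eq_linearCombination]

lemma Valid.one_le_add_sub (hπ : Valid f π) (x : ℝ) : 1 ≤ π x + π (f - x) := by
  have := (valid_iff.1 hπ).2 (single x 1 + single (f - x) 1) (feasible_iff.2 ⟨0, by simp⟩)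
  simpa using this

/-- Lowering `π` at `c` to the cost of `g` keeps it valid, by substituting `g` for every copy
of `c` in a feasible `y`. -/
lemma MinimalValid.le_linearCombination (hπ : MinimalValid f π) {c : ℝ} {g : ℝ →₀ ℕ} {m : ℤ}
    (hg : linearCombination ℕ id g = c + m) : π c ≤ linearCombination ℕ π g := by
  by_contra! hlt
  obtain ⟨hnn, hvalid⟩ := valid_iff.1 hπ.1
  set π' := update π c (linearCombination ℕ π g)
  have hoff (y : ℝ →₀ ℕ) :
      linearCombination ℕ π' (y.erase c) = linearCombination ℕ π (y.erase c) :=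
    linearCombination_congr _ fun r hr => update_of_ne (by simp_all [support_erase]) _ _
  refine hπ.2 ⟨π', valid_iff.2 ⟨fun x => ?_, fun y hy => ?_⟩, fun x => ?_, fun h => ?_⟩
  · rcases eq_or_ne x c with rfl | hx
    · simpa [π'] using linearCombination_nonneg hnn g
    · simpa [π', hx] using hnn x
  · obtain ⟨z, hz⟩ := feasible_iff.1 hy
    have hy' : Feasible f (y.erase c + y c • g) := by
      refine feasible_iff.2 ⟨z + y c * m, ?_⟩
      have := congrArg (linearCombination ℕ id) (erase_add_single c y)
      simp only [map_add, map_nsmul, linearCombination_single, id, nsmul_eq_mul, hg] at this ⊢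
      push_cast; linarith
    rw [← erase_add_single c y, map_add, linearCombination_single, hoff]
    simpa [π', nsmul_eq_mul] using hvalid _ hy'
  · rcases eq_or_ne x c with rfl | hx
    · simpa [π'] using hlt.le
    · simp [π', hx]
  · exact hlt.ne (by simpa [π'] using congrFun h c)

lemma MinimalValid.nonneg (hπ : MinimalValid f π) (x : ℝ) : 0 ≤ π x := hπ.1.1 x

lemma MinimalValid.map_zero (hπ : MinimalValid f π) : π 0 = 0 :=
  le_antisymm (by simpa using hπ.le_linearCombination (g := 0) (m := 0) (by simp))
    (hπ.nonneg 0)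

lemma MinimalValid.subadditive (hπ : MinimalValid f π) (x y : ℝ) : π (x + y) ≤ π x + π y := by
  have := hπ.le_linearCombination (c := x + y) (g := single x 1 + single y 1) (m := 0) (by simp)
  simpa using this

lemma MinimalValid.periodic (hπ : MinimalValid f π) : Periodic π 1 := fun x =>
  le_antisymm (by simpa using hπ.le_linearCombination (g := single x 1) (m := -1) (by simp))
    (by simpa using hπ.le_linearCombination (g := single (x + 1) 1) (m := 1) (by simp))

/-- If `π x + π (f - x) > 1`, dividing `π` by that sum on `x + ℤ` keeps it valid: a feasible `y`
meeting `x + ℤ` already costs at least that sum, by `le_linearCombination` applied to the rest. -/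
lemma MinimalValid.eq_zero_of_one_lt_add_sub (hπ : MinimalValid f π) {x : ℝ}
    (hx : 1 < π x + π (f - x)) : π x = 0 := by
  classical
  by_contra hne
  have hpos : 0 < π x := (hπ.nonneg x).lt_of_ne' hne
  set s := π x + π (f - x)
  set P : Set ℝ := {r | ∃ t : ℤ, r = x + t}
  set π' : ℝ → ℝ := fun r => if r ∈ P then π r / s else π r
  have hdiv : ∀ r, π r / s ≤ π r := fun r => div_le_self (hπ.nonneg r) hx.le
  have hge : ∀ r, π r / s ≤ π' r := fun r => by
    by_cases hr : r ∈ P <;> simp [π', hr, hdiv]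
  refine hπ.2 ⟨π', valid_iff.2 ⟨fun r => ?_, fun y hy => ?_⟩, fun r => ?_, fun h => ?_⟩
  · exact (div_nonneg (hπ.nonneg r) (by linarith)).trans (hge r)
  · by_cases hP : ∃ r ∈ y.support, r ∈ P
    · obtain ⟨r, hr, t, rfl⟩ := hP
      obtain ⟨z, hz⟩ := feasible_iff.1 hy
      have hdec : y - single (x + t) 1 + single (x + t) 1 = y :=
        tsub_add_cancel_of_le (single_le_iff.2 (Nat.one_le_iff_ne_zero.2 (mem_support_iff.1 hr)))
      have hrest := hπ.le_linearCombination (c := f - x) (g := y - single (x + t) 1) (m := z - t)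
        (by have := congrArg (linearCombination ℕ id) hdec; simp at this; push_cast; linarith)
      have hcost : s ≤ linearCombination ℕ π y := by
        have hper : π (x + t) = π x := by simpa using hπ.periodic.int_mul t x
        rw [← hdec, map_add, linearCombination_single, one_smul, hper]
        linarith
      calc (1 : ℝ) ≤ linearCombination ℕ π y / s := (one_le_div (by linarith)).2 hcost
        _ = linearCombination ℕ (fun r => π r / s) y := (linearCombination_div y s).symm
        _ ≤ linearCombination ℕ π' y := linearCombination_mono y fun r _ => hge r
    · push Not at hP
      rw [linearCombination_congr (w := π) y fun r hr => by simp [π', hP r hr]]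
      exact (valid_iff.1 hπ.1).2 y hy
  · by_cases hr : r ∈ P <;> simp [π', hr, hdiv]
  · have : π x / s = π x := by simpa [π', P] using congrFun h x
    exact (div_lt_self hpos hx).ne this

lemma MinimalValid.add_sub_eq_one (hπ : MinimalValid f π) (x : ℝ) : π x + π (f - x) = 1 := by
  refine le_antisymm (not_lt.1 fun hx => ?_) (hπ.1.one_le_add_sub x)
  have hx' : 1 < π (f - x) + π (f - (f - x)) := by rwa [sub_sub_cancel, add_comm]
  linarith [hπ.eq_zero_of_one_lt_add_sub hx, hπ.eq_zero_of_one_lt_add_sub hx']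

section Subadditive

variable (h0 : g 0 = 0) (hsub : ∀ x y, g (x + y) ≤ g x + g y)
include h0 hsub

lemma apply_nsmul_le (n : ℕ) (x : ℝ) : g (n • x) ≤ n • g x := by
  simpa using Finset.le_sum_of_subadditive g h0.le hsub (Finset.range n) fun _ => x

lemma apply_linearCombination_le (y : ℝ →₀ ℕ) :
    g (linearCombination ℕ id y) ≤ linearCombination ℕ g y := by
  rw [linearCombination_apply, linearCombination_apply, Finsupp.sum, Finsupp.sum]
  exact (Finset.le_sum_of_subadditive g h0.le hsub _ _).trans
    (Finset.sum_le_sum fun r _ => apply_nsmul_le h0 hsub _ _)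

lemma nonneg_of_bddBelow (hbdd : BddBelow (range g)) (x : ℝ) : 0 ≤ g x := by
  by_contra! hx
  obtain ⟨b, hb⟩ := hbdd
  obtain ⟨n, hn⟩ := exists_nat_gt (b / g x)
  have := (hb ⟨n • x, rfl⟩).trans (apply_nsmul_le h0 hsub n x)
  rw [nsmul_eq_mul] at this
  linarith [(div_lt_iff_of_neg hx).1 hn]

theorem minimalValid_of_subadditive (hbdd : BddBelow (range g)) (hper : Periodic g 1)
    (hsym : ∀ x, g x + g (f - x) = 1) : MinimalValid f g := by
  have hvalid : Valid f g := by
    refine valid_iff.2 ⟨nonneg_of_bddBelow h0 hsub hbdd, fun y hy => ?_⟩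
    obtain ⟨z, hz⟩ := feasible_iff.1 hy
    have hf : g f = 1 := by simpa [h0] using hsym 0
    calc (1 : ℝ) = g (f + z) := by rw [← hf]; simpa using (hper.int_mul z f).symm
      _ = g (linearCombination ℕ id y) := by rw [← hz, add_sub_cancel]
      _ ≤ linearCombination ℕ g y := apply_linearCombination_le h0 hsub y
  refine ⟨hvalid, fun ⟨g', hg', hle, hne⟩ => hne (funext fun x => le_antisymm (hle x) ?_)⟩
  linarith [hg'.one_le_add_sub x, hle (f - x), hsym x]

end Subadditive

end Characterization

lemma isBigO_principal_biUnion {α ι E F : Type*} [Norm E] [SeminormedAddCommGroup F]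
    {f : α → E} {g : α → F} {s : Finset ι} {t : ι → Set α}
    (h : ∀ i ∈ s, f =O[𝓟 (t i)] g) : f =O[𝓟 (⋃ i ∈ s, t i)] g := by
  classical
  induction s using Finset.induction_on with
  | empty => simp
  | insert i s _ ih =>
    rw [Finset.set_biUnion_insert, ← sup_principal]
    exact (h i (Finset.mem_insert_self i s)).sup
      (ih fun j hj => h j (Finset.mem_insert_of_mem hj))

section ConvexHull

variable {E : Type*} [NormedAddCommGroup E] [NormedSpace ℝ E]

lemma AffineMap.map_sum_smul {ι : Type*} (A : E →ᵃ[ℝ] ℝ) (s : Finset ι) (w : ι → ℝ)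
    (v : ι → E) (hw : ∑ i ∈ s, w i = 1) :
    A (∑ i ∈ s, w i • v i) = ∑ i ∈ s, w i * A (v i) := by
  have := s.map_affineCombination v w hw A
  rw [s.affineCombination_eq_linear_combination _ _ hw,
    s.affineCombination_eq_linear_combination _ _ hw] at this
  simpa using this

variable {V : Finset E} {A : E →ᵃ[ℝ] ℝ}

lemma le_apply_of_mem_convexHull {m : ℝ} (hm : ∀ v ∈ V, m ≤ A v) {p : E}
    (hp : p ∈ convexHull ℝ (V : Set E)) : m ≤ A p :=
  convexHull_min hm ((convex_Ici m).affine_preimage A) hp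

/-- Moving every vertex where `A` is positive to a fixed vertex `v₀` where `A` vanishes
moves a convex combination `p` by at most `C * A p`. -/
lemma exists_dist_le_mul_of_mem_convexHull (hA : ∀ v ∈ V, 0 ≤ A v) {v₀ : E} (hv₀ : v₀ ∈ V)
    (hAv₀ : A v₀ = 0) :
    ∃ C, ∀ p ∈ convexHull ℝ (V : Set E),
      ∃ z ∈ convexHull ℝ (V : Set E), A z = 0 ∧ dist p z ≤ C * A p := by
  classical
  set C := ∑ v ∈ V, dist v v₀ / A v
  let φ : E → E := fun v => if A v = 0 then v else v₀
  have hφV : ∀ v ∈ V, φ v ∈ V := fun v hv => by by_cases h : A v = 0 <;> simp [φ, h, hv, hv₀]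
  have hAφ : ∀ v, A (φ v) = 0 := fun v => by by_cases h : A v = 0 <;> simp [φ, h, hAv₀]
  have hφ : ∀ v ∈ V, dist v (φ v) ≤ C * A v := by
    intro v hv
    by_cases h : A v = 0
    · simp [φ, h]
    have hC : dist v v₀ / A v ≤ C :=
      Finset.single_le_sum (f := fun u => dist u v₀ / A u)
        (fun u hu => div_nonneg dist_nonneg (hA u hu)) hv
    calc dist v (φ v) = dist v v₀ / A v * A v := by simp [φ, h]
      _ ≤ C * A v := mul_le_mul_of_nonneg_right hC (hA v hv)
  refine ⟨C, fun p hp => ?_⟩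
  obtain ⟨w, hw0, hw1, rfl⟩ := Finset.mem_convexHull'.1 hp
  refine ⟨∑ v ∈ V, w v • φ v, (convex_convexHull ℝ _).sum_mem hw0 hw1
    fun v hv => subset_convexHull ℝ _ (hφV v hv), by simp [A.map_sum_smul _ _ _ hw1, hAφ], ?_⟩
  rw [A.map_sum_smul _ _ _ hw1, dist_eq_norm, ← Finset.sum_sub_distrib, Finset.mul_sum]
  refine (norm_sum_le _ _).trans (Finset.sum_le_sum fun v hv => ?_)
  rw [← smul_sub, norm_smul, Real.norm_of_nonneg (hw0 v hv), ← dist_eq_norm, mul_left_comm]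
  exact mul_le_mul_of_nonneg_left (hφ v hv) (hw0 v hv)

theorem isBigO_principal_convexHull (hA : ∀ v ∈ V, 0 ≤ A v) {G : E → ℝ} {K : ℝ≥0}
    (hG : LipschitzWith K G) (hGA : ∀ z ∈ convexHull ℝ (V : Set E), A z = 0 → G z = 0) :
    G =O[𝓟 (convexHull ℝ (V : Set E))] A := by
  rw [isBigO_principal]
  by_cases hV : ∃ v₀ ∈ V, A v₀ = 0
  · obtain ⟨v₀, hv₀, hAv₀⟩ := hV
    obtain ⟨C, hC⟩ := exists_dist_le_mul_of_mem_convexHull hA hv₀ hAv₀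
    refine ⟨K * C, fun p hp => ?_⟩
    obtain ⟨z, hz, hAz, hdist⟩ := hC p hp
    calc ‖G p‖ = dist (G p) (G z) := by simp [hGA z hz hAz]
      _ ≤ K * dist p z := hG.dist_le_mul p z
      _ ≤ K * (C * A p) := by gcongr
      _ = K * C * ‖A p‖ := by rw [Real.norm_of_nonneg (le_apply_of_mem_convexHull hA hp)]; ring
  · push Not at hV
    rcases V.eq_empty_or_nonempty with rfl | hne
    · exact ⟨0, by simp⟩
    obtain ⟨v, hv, hmin⟩ := V.exists_min_image A hne
    have hm : 0 < A v := (hA v hv).lt_of_ne' (hV v hv)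
    obtain ⟨B, hB⟩ := (V.finite_toSet.isCompact_convexHull (𝕜 := ℝ)).exists_bound_of_continuousOn
      hG.continuous.continuousOn
    have hB0 : 0 ≤ B := (norm_nonneg _).trans (hB v (subset_convexHull ℝ _ hv))
    refine ⟨B / A v, fun p hp => ?_⟩
    have hAp : A v ≤ A p := le_apply_of_mem_convexHull hmin hp
    calc ‖G p‖ ≤ B := hB p hp
      _ = B / A v * A v := by field_simp
      _ ≤ B / A v * ‖A p‖ := by
        rw [Real.norm_of_nonneg (hm.le.trans hAp)]; gcongr

end ConvexHull

lemma notMem_extremePoints_of_eventually {E : Type*} [NormedAddCommGroup E] [NormedSpace ℝ E]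
    {K : Set E} {p w : E} (hw : w ≠ 0) (h : ∀ᶠ t in 𝓝 (0 : ℝ), p + t • w ∈ K) :
    p ∉ extremePoints ℝ K := by
  intro hp
  obtain ⟨ε, hε, hball⟩ := Metric.eventually_nhds_iff.1 h
  have hmem : ∀ s : ℝ, |s| = ε / 2 → p + s • w ∈ K := fun s hs =>
    hball (by rw [Real.dist_eq, sub_zero, hs]; linarith)
  have hseg : p ∈ openSegment ℝ (p + (ε / 2) • w) (p + (-(ε / 2)) • w) :=
    ⟨1 / 2, 1 / 2, by norm_num, by norm_num, by norm_num, by module⟩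
  have hε2 : |ε / 2| = ε / 2 := abs_of_pos (half_pos hε)
  have := hp.2 (hmem _ hε2) (hmem _ (by rw [abs_neg, hε2])) hseg
  exact hw ((smul_eq_zero.1 (add_eq_left.1 this)).resolve_left (by positivity))

lemma eventually_add_mul_mem_Icc {a c u v : ℝ} (h : a ∈ Ioo u v ∨ c = 0 ∧ a ∈ Icc u v) :
    ∀ᶠ t in 𝓝 (0 : ℝ), a + t * c ∈ Icc u v := by
  rcases h with h | ⟨rfl, h⟩
  · exact ((continuous_const.add (continuous_id.mul continuous_const)).tendsto' 0 a
      (by simp)).eventually (Icc_mem_nhds h.1 h.2)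
  · simp [h]

section Cell

variable {a₁ b₁ a₂ b₂ a₃ b₃ : ℝ}

def cell (a₁ b₁ a₂ b₂ a₃ b₃ : ℝ) : Set (ℝ × ℝ) :=
  Icc a₁ b₁ ×ˢ Icc a₂ b₂ ∩ (fun p => p.1 + p.2) ⁻¹' Icc a₃ b₃

lemma convex_cell : Convex ℝ (cell a₁ b₁ a₂ b₂ a₃ b₃) :=
  ((convex_Icc _ _).prod (convex_Icc _ _)).inter
    ((convex_Icc _ _).linear_preimage (LinearMap.id.coprod LinearMap.id))

lemma isCompact_cell : IsCompact (cell a₁ b₁ a₂ b₂ a₃ b₃) :=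
  (isCompact_Icc.prod isCompact_Icc).inter_right (isClosed_Icc.preimage continuous_add)

lemma tight_of_mem_extremePoints_cell {p : ℝ × ℝ}
    (hp : p ∈ extremePoints ℝ (cell a₁ b₁ a₂ b₂ a₃ b₃)) {w : ℝ × ℝ} (hw : w ≠ 0) :
    (w.1 ≠ 0 ∧ p.1 ∈ ({a₁, b₁} : Set ℝ)) ∨ (w.2 ≠ 0 ∧ p.2 ∈ ({a₂, b₂} : Set ℝ)) ∨
      (w.1 + w.2 ≠ 0 ∧ p.1 + p.2 ∈ ({a₃, b₃} : Set ℝ)) := by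
  obtain ⟨⟨h₁, h₂⟩, h₃⟩ := hp.1
  have free : ∀ {a c u v : ℝ}, a ∈ Icc u v → (c ≠ 0 → a ∉ ({u, v} : Set ℝ)) →
      a ∈ Ioo u v ∨ c = 0 ∧ a ∈ Icc u v := fun {a c u v} ha h => by
    by_cases hc : c = 0
    · exact .inr ⟨hc, ha⟩
    · have h := h hc
      simp only [mem_insert_iff, mem_singleton_iff, not_or] at h
      exact .inl ⟨ha.1.lt_of_ne' h.1, ha.2.lt_of_ne h.2⟩
  by_contra! h
  refine notMem_extremePoints_of_eventually hw ?_ hp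
  filter_upwards [eventually_add_mul_mem_Icc (free h₁ h.1),
    eventually_add_mul_mem_Icc (free h₂ h.2.1),
    eventually_add_mul_mem_Icc (free (c := w.1 + w.2) h₃ h.2.2)] with t ht₁ ht₂ ht₃
  refine ⟨⟨by simpa [mul_comm] using ht₁, by simpa [mul_comm] using ht₂⟩, ?_⟩
  simp only [mem_preimage, Prod.fst_add, Prod.snd_add, Prod.smul_fst, Prod.smul_snd, smul_eq_mul]
  convert ht₃ using 1; ring

lemma extremePoints_cell_subset : extremePoints ℝ (cell a₁ b₁ a₂ b₂ a₃ b₃) ⊆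
    ↑((({a₁, b₁} : Finset ℝ) ∪ Finset.image₂ (· - ·) {a₃, b₃} {a₂, b₂}) ×ˢ
      (({a₂, b₂} : Finset ℝ) ∪ Finset.image₂ (· - ·) {a₃, b₃} {a₁, b₁})) := by
  intro p hp
  have h₁₂ := tight_of_mem_extremePoints_cell hp (w := (1, -1)) (by simp)
  have h₁₃ := tight_of_mem_extremePoints_cell hp (w := (1, 0)) (by simp)
  have h₂₃ := tight_of_mem_extremePoints_cell hp (w := (0, 1)) (by simp)
  simp only [ne_eq, one_ne_zero, not_false_eq_true, true_and, neg_eq_zero, add_neg_cancel,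
    not_true_eq_false, false_and, or_false, add_zero, zero_add, false_or] at h₁₂ h₁₃ h₂₃
  simp only [← Finset.coe_insert, ← Finset.coe_singleton, Finset.mem_coe] at h₁₂ h₁₃ h₂₃
  refine Finset.mem_product.2 ⟨?_, ?_⟩
  · by_cases h₁ : p.1 ∈ ({a₁, b₁} : Finset ℝ)
    · exact Finset.mem_union_left _ h₁
    · have := Finset.mem_image₂_of_mem (f := (· - ·)) (h₁₃.resolve_left h₁) (h₁₂.resolve_left h₁)
      rw [add_sub_cancel_right] at this
      exact Finset.mem_union_right _ this
  · by_cases h₂ : p.2 ∈ ({a₂, b₂} : Finset ℝ)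
    · exact Finset.mem_union_left _ h₂
    · have := Finset.mem_image₂_of_mem (f := (· - ·)) (h₂₃.resolve_left h₂)
        (h₁₂.resolve_right h₂)
      rw [add_sub_cancel_left] at this
      exact Finset.mem_union_right _ this

lemma exists_finset_cell_eq_convexHull :
    ∃ V : Finset (ℝ × ℝ), cell a₁ b₁ a₂ b₂ a₃ b₃ = convexHull ℝ ↑V := by
  classical
  set V := ((({a₁, b₁} : Finset ℝ) ∪ Finset.image₂ (· - ·) {a₃, b₃} {a₂, b₂}) ×ˢ
      (({a₂, b₂} : Finset ℝ) ∪ Finset.image₂ (· - ·) {a₃, b₃} {a₁, b₁})).filter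
    (· ∈ cell a₁ b₁ a₂ b₂ a₃ b₃)
  have hV : (V : Set (ℝ × ℝ)) ⊆ cell a₁ b₁ a₂ b₂ a₃ b₃ := fun p hp => (Finset.mem_filter.1 hp).2
  refine ⟨V, subset_antisymm ?_ (convexHull_min hV convex_cell)⟩
  have hext : extremePoints ℝ (cell a₁ b₁ a₂ b₂ a₃ b₃) ⊆ V := fun p hp =>
    Finset.mem_filter.2 ⟨extremePoints_cell_subset hp, hp.1⟩
  calc cell a₁ b₁ a₂ b₂ a₃ b₃ = closure (convexHull ℝ (extremePoints ℝ (cell a₁ b₁ a₂ b₂ a₃ b₃))) :=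
        (closure_convexHull_extremePoints isCompact_cell convex_cell).symm
    _ ⊆ closure (convexHull ℝ ↑V) := closure_mono (convexHull_mono hext)
    _ = convexHull ℝ ↑V := (V.finite_toSet.isCompact_convexHull (𝕜 := ℝ)).isClosed.closure_eq

end Cell

section PiecewiseLinear

variable {π : ℝ → ℝ}

lemma finite_inter_Icc_of_isolated {B : Set ℝ} (hBc : IsClosed B)
    (hBd : ∀ x ∈ B, ∃ ε > (0 : ℝ), ∀ y ∈ B, |y - x| < ε → y = x) (a b : ℝ) :
    (B ∩ Icc a b).Finite := by
  refine (isCompact_Icc.inter_left hBc).finite (IsDiscrete.mono ?_ inter_subset_left)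
  refine isDiscrete_iff_forall_mem_exists_isOpen.2 fun x hx => ?_
  obtain ⟨ε, hε, h⟩ := hBd x hx
  refine ⟨Metric.ball x ε, Metric.isOpen_ball, subset_antisymm (fun y hy => h y hy.2 hy.1) ?_⟩
  simpa using ⟨hε, hx⟩

lemma exists_affine_on_Icc {B : Set ℝ} (hc : Continuous π)
    (hB : ∀ x ∉ B, ∃ a b : ℝ, ∀ z ∈ connectedComponentIn Bᶜ x, π z = a * z + b)
    {u v : ℝ} (huv : Disjoint (Ioo u v) B) : ∃ c d : ℝ, ∀ z ∈ Icc u v, π z = c * z + d := by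
  rcases le_or_gt v u with hvu | hlt
  · exact ⟨0, π u, fun z hz => by simp [le_antisymm (hz.2.trans hvu) hz.1]⟩
  have hmid : (u + v) / 2 ∈ Ioo u v := ⟨by linarith, by linarith⟩
  obtain ⟨c, d, h⟩ := hB _ (huv.subset_compl_right hmid)
  refine ⟨c, d, ?_⟩
  rw [← closure_Ioo hlt.ne]
  refine closure_minimal (fun z hz => h z ?_) (isClosed_eq hc (by fun_prop))
  exact isPreconnected_Ioo.subset_connectedComponentIn hmid huv.subset_compl_right hz

lemma PiecewiseLinear.exists_affine_cover (hπ : PiecewiseLinear π) (hc : Continuous π)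
    (a b : ℝ) : ∃ I : Finset (ℝ × ℝ), Icc a b ⊆ ⋃ i ∈ I, Icc i.1 i.2 ∧
      ∀ i ∈ I, ∃ c d : ℝ, ∀ z ∈ Icc i.1 i.2, π z = c * z + d := by
  classical
  obtain ⟨B, hBc, hBd, hBa⟩ := hπ
  set D := (finite_inter_Icc_of_isolated hBc hBd a b).toFinset ∪ {a, b}
  refine ⟨(D ×ˢ D).filter fun i => Disjoint (Ioo i.1 i.2) B, fun x hx => ?_,
    fun i hi => exists_affine_on_Icc hc hBa (Finset.mem_filter.1 hi).2⟩
  have hl : (D.filter (· ≤ x)).Nonempty := ⟨a, by simp [D, hx.1]⟩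
  have hr : (D.filter (x ≤ ·)).Nonempty := ⟨b, by simp [D, hx.2]⟩
  have hu := Finset.mem_filter.1 (Finset.max'_mem _ hl)
  have hv := Finset.mem_filter.1 (Finset.min'_mem _ hr)
  have hD : ∀ d ∈ D, d ∈ Icc a b := fun d hd => by
    rcases Finset.mem_union.1 hd with h | h
    · exact ((Set.Finite.mem_toFinset _).1 h).2
    · rcases Finset.mem_insert.1 h with rfl | h
      · exact ⟨le_rfl, hx.1.trans hx.2⟩
      · rw [Finset.mem_singleton.1 h]; exact ⟨hx.1.trans hx.2, le_rfl⟩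
  refine mem_iUnion₂.2 ⟨(_, _), Finset.mem_filter.2 ⟨Finset.mem_product.2 ⟨hu.1, hv.1⟩, ?_⟩,
    hu.2, hv.2⟩
  refine Set.disjoint_left.2 fun w hw hwB => ?_
  have hwD : w ∈ D := Finset.mem_union_left _ ((Set.Finite.mem_toFinset _).2
    ⟨hwB, (hD _ hu.1).1.trans hw.1.le, hw.2.le.trans (hD _ hv.1).2⟩)
  rcases le_total w x with h | h
  · exact (Finset.le_max' _ w (Finset.mem_filter.2 ⟨hwD, h⟩)).not_gt hw.1
  · exact (Finset.min'_le _ w (Finset.mem_filter.2 ⟨hwD, h⟩)).not_gt hw.2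

end PiecewiseLinear

section Slack

variable {g π πb : ℝ → ℝ}

def slack (g : ℝ → ℝ) (p : ℝ × ℝ) : ℝ := g p.1 + g p.2 - g (p.1 + p.2)

lemma slack_nonneg (hsub : ∀ x y, g (x + y) ≤ g x + g y) (p : ℝ × ℝ) : 0 ≤ slack g p :=
  sub_nonneg.2 (hsub p.1 p.2)

lemma LipschitzWith.slack {K : ℝ≥0} (hg : LipschitzWith K g) :
    LipschitzWith (K * 1 + K * 1 + K * (1 + 1)) (slack g) :=
  ((hg.comp LipschitzWith.prod_fst).add (hg.comp LipschitzWith.prod_snd)).sub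
    (hg.comp (LipschitzWith.prod_fst.add LipschitzWith.prod_snd))

lemma slack_fract (hg : Periodic g 1) (p : ℝ × ℝ) :
    slack g p = slack g (Int.fract p.1, Int.fract p.2) := by
  have hint : ∀ x (n : ℤ), g (x + n) = g x := fun x n => by simpa using hg.int_mul n x
  have hsum : p.1 + p.2 = Int.fract p.1 + Int.fract p.2 + ((⌊p.1⌋ + ⌊p.2⌋ : ℤ) : ℝ) := by
    push_cast; simp only [Int.fract]; ring
  simp only [slack]
  rw [hsum, hint, ← hint (Int.fract p.1) ⌊p.1⌋, ← hint (Int.fract p.2) ⌊p.2⌋,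
    Int.fract_add_floor, Int.fract_add_floor]

lemma isBigO_slack_cell {K : ℝ≥0} (hsub : ∀ x y, π (x + y) ≤ π x + π y)
    (hπb : LipschitzWith K πb) (hE : ∀ p, slack π p = 0 → slack πb p = 0)
    {a₁ b₁ a₂ b₂ a₃ b₃ c₁ d₁ c₂ d₂ c₃ d₃ : ℝ} (h₁ : ∀ z ∈ Icc a₁ b₁, π z = c₁ * z + d₁)
    (h₂ : ∀ z ∈ Icc a₂ b₂, π z = c₂ * z + d₂) (h₃ : ∀ z ∈ Icc a₃ b₃, π z = c₃ * z + d₃) :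
    slack πb =O[𝓟 (cell a₁ b₁ a₂ b₂ a₃ b₃)] slack π := by
  obtain ⟨V, hV⟩ := exists_finset_cell_eq_convexHull (a₁ := a₁) (b₁ := b₁) (a₂ := a₂)
    (b₂ := b₂) (a₃ := a₃) (b₃ := b₃)
  let A : ℝ × ℝ →ᵃ[ℝ] ℝ :=
    { toFun := fun p => c₁ * p.1 + d₁ + (c₂ * p.2 + d₂) - (c₃ * (p.1 + p.2) + d₃)
      linear := (c₁ - c₃) • LinearMap.fst ℝ ℝ ℝ + (c₂ - c₃) • LinearMap.snd ℝ ℝ ℝ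
      map_vadd' := fun p v => by simp; ring }
  have hA : ∀ p ∈ cell a₁ b₁ a₂ b₂ a₃ b₃, slack π p = A p := fun p ⟨⟨hp₁, hp₂⟩, hp₃⟩ => by
    simp [slack, A, h₁ _ hp₁, h₂ _ hp₂, h₃ _ hp₃]
  rw [hV] at hA ⊢
  refine (isBigO_principal_convexHull (fun v hv => ?_) hπb.slack fun z hz hAz => hE z ?_).congr'
    EventuallyEq.rfl (eventuallyEq_principal.2 fun p hp => (hA p hp).symm)
  · rw [← hA v (subset_convexHull ℝ _ hv)]; exact slack_nonneg hsub v
  · rw [hA z hz, hAz]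

theorem isBigO_slack {K : ℝ≥0} (hπ : ContPiecewiseLinear π)
    (hsub : ∀ x y, π (x + y) ≤ π x + π y) (hper : Periodic π 1) (hπb : LipschitzWith K πb)
    (hperb : Periodic πb 1) (hE : ∀ p, slack π p = 0 → slack πb p = 0) :
    slack πb =O[⊤] slack π := by
  obtain ⟨I, hcover, haff⟩ := hπ.1.exists_affine_cover hπ.2 0 2
  have hsq : slack πb =O[𝓟 (Icc 0 1 ×ˢ Icc 0 1)] slack π := by
    refine (isBigO_principal_biUnion (s := I ×ˢ I ×ˢ I)
      (t := fun j => cell j.1.1 j.1.2 j.2.1.1 j.2.1.2 j.2.2.1 j.2.2.2) fun j hj => ?_).mono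
      (principal_mono.2 ?_)
    · simp only [Finset.mem_product] at hj
      obtain ⟨c₁, d₁, h₁⟩ := haff _ hj.1
      obtain ⟨c₂, d₂, h₂⟩ := haff _ hj.2.1
      obtain ⟨c₃, d₃, h₃⟩ := haff _ hj.2.2
      exact isBigO_slack_cell hsub hπb hE h₁ h₂ h₃
    · rintro p ⟨hp₁, hp₂⟩
      obtain ⟨i₁, hi₁, hx⟩ := mem_iUnion₂.1 (hcover ⟨hp₁.1, by linarith [hp₁.2]⟩)
      obtain ⟨i₂, hi₂, hy⟩ := mem_iUnion₂.1 (hcover ⟨hp₂.1, by linarith [hp₂.2]⟩)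
      obtain ⟨i₃, hi₃, hs⟩ := mem_iUnion₂.1 (hcover (a := p.1 + p.2)
        ⟨by linarith [hp₁.1, hp₂.1], by linarith [hp₁.2, hp₂.2]⟩)
      exact mem_iUnion₂.2 ⟨(i₁, i₂, i₃), by simp [hi₁, hi₂, hi₃], ⟨hx, hy⟩, hs⟩
  obtain ⟨C, hC⟩ := isBigO_principal.1 hsq
  refine isBigO_top.2 ⟨C, fun p => ?_⟩
  rw [slack_fract hperb, slack_fract hper]
  exact hC _ ⟨⟨Int.fract_nonneg _, (Int.fract_lt_one _).le⟩,
    ⟨Int.fract_nonneg _, (Int.fract_lt_one _).le⟩⟩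

lemma MinimalValid.add_mul_of_abs_slack_le {f : ℝ} (hπ : MinimalValid f π) (hπc : Continuous π)
    (hπbc : Continuous πb) (h0 : πb 0 = 0) (hper : Periodic πb 1)
    (hsym : ∀ x, πb x + πb (f - x) = 0) {C e : ℝ} (hC : ∀ p, |slack πb p| ≤ C * slack π p)
    (he : |e| * C ≤ 1) : MinimalValid f (fun x => π x + e * πb x) := by
  have hperg : Periodic (fun x => π x + e * πb x) 1 := fun x => by
    simp only [hπ.periodic x, hper x]
  refine minimalValid_of_subadditive (by simp [hπ.map_zero, h0]) (fun x y => ?_)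
    (hperg.compact_of_continuous one_ne_zero (by fun_prop)).bddBelow hperg
    fun x => by linear_combination hπ.add_sub_eq_one x + e * hsym x
  have hΔ := slack_nonneg hπ.subadditive (x, y)
  have : -(e * slack πb (x, y)) ≤ slack π (x, y) := calc
    -(e * slack πb (x, y)) ≤ |e| * |slack πb (x, y)| := by rw [← abs_mul]; exact neg_le_abs _
    _ ≤ |e| * (C * slack π (x, y)) := by gcongr; exact hC _
    _ = (|e| * C) * slack π (x, y) := by ring
    _ ≤ slack π (x, y) := mul_le_of_le_one_left hΔ he
  simp only [slack] at this
  linarith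

end Slack

theorem stmt9_general (f : ℝ) (π : ℝ → ℝ)
    (hπ : MinimalValid f π) (hcpl : ContPiecewiseLinear π)
    (πb : ℝ → ℝ) (L : NNReal) (hlip : LipschitzWith L πb)
    (h0 : πb 0 = 0) (hfval : πb f = 0)
    (hadd : ∀ q ∈ Eset π, πb q.1 + πb q.2 = πb (q.1 + q.2))
    (hper : ∀ (x : ℝ) (t : ℤ), πb (x + (t : ℝ)) = πb x) :
    ∃ ε > (0 : ℝ), MinimalValid f (fun x => π x + ε * πb x) ∧
      MinimalValid f (fun x => π x - ε * πb x) := by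
  have hperb : Periodic πb 1 := fun x => by exact_mod_cast hper x 1
  have hE : ∀ p, slack π p = 0 → slack πb p = 0 := fun p hp => by
    have := hadd p (show π p.1 + π p.2 = π (p.1 + p.2) by simp only [slack] at hp; linarith)
    simp only [slack]; linarith
  have hsym : ∀ x, πb x + πb (f - x) = 0 := fun x => by
    have hπf : π f = 1 := by simpa [hπ.map_zero] using hπ.add_sub_eq_one 0
    simpa [slack, hfval] using hE (x, f - x) (by simp [slack, hπ.add_sub_eq_one x, hπf])
  obtain ⟨C, hC, hbound⟩ := (isBigO_slack hcpl hπ.subadditive hπ.periodic hlip hperb hE).exists_pos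
  have hslack : ∀ p, |slack πb p| ≤ C * slack π p := fun p => by
    simpa [abs_of_nonneg (slack_nonneg hπ.subadditive p)] using isBigOWith_top.1 hbound p
  have hperturb := fun e : ℝ => hπ.add_mul_of_abs_slack_le hcpl.2 hlip.continuous h0 hperb hsym
    (e := e) hslack
  refine ⟨C⁻¹, inv_pos.2 hC, hperturb _ ?_, ?_⟩
  · rw [abs_of_pos (inv_pos.2 hC), inv_mul_cancel₀ hC.ne']
  · simpa [sub_eq_add_neg] using hperturb (-C⁻¹) (by
      rw [abs_neg, abs_of_pos (inv_pos.2 hC), inv_mul_cancel₀ hC.ne'])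

theorem stmt9 (f : ℝ) (hf : f ∈ Set.Ioo (0 : ℝ) 1) (π : ℝ → ℝ)
    (hπ : MinimalValid f π) (hcpl : ContPiecewiseLinear π)
    (πb : ℝ → ℝ) (L : NNReal) (hlip : LipschitzWith L πb)
    (h0 : πb 0 = 0) (hfval : πb f = 0)
    (hadd : ∀ q ∈ Eset π, πb q.1 + πb q.2 = πb (q.1 + q.2))
    (hper : ∀ (x : ℝ) (t : ℤ), πb (x + (t : ℝ)) = πb x) :
    ∃ ε > (0 : ℝ), MinimalValid f (fun x => π x + ε * πb x) ∧
      MinimalValid f (fun x => π x - ε * πb x) :=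
  stmt9_general f π hπ hcpl πb L hlip h0 hfval hadd hper
end

section
/- Let F ⊂ [0,1]² be a convex polygon (the convex hull of a nonempty finite set of points, with vertex set verts(F)), and let g : F → ℝ be the restriction of an affine function. Suppose there is m > 0 such that for each vertex v of F, either g(v) = 0 or g(v) ≥ m. Let S = {x ∈ F : g(x) = 0} and assume S is nonempty. Then g(x) ≥ m·d(x, S)/2 for every x ∈ F, where d(x, S) denotes the Euclidean distance from x to S. -/
/-!
Write `F` as the convex hull of its vertices and split them into the zeros `Z` of `g` and the
vertices `P` where `g ≥ m`. Every `x ∈ F` lies on a segment `x = (1 - t) z + t p` with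
`z ∈ conv Z ⊆ S` and `p ∈ conv P`. Since `g` is affine, `g x = t g p ≥ t m`, while
`d(x, S) ≤ |x - z| = t |p - z| ≤ t diam F ≤ 2 t` because `F ⊆ [0,1]²`.
-/

open Set Metric

section Normed

variable {E : Type*} [NormedAddCommGroup E] [NormedSpace ℝ E]

theorem Set.Finite.convexHull_extremePoints_convexHull {A : Set E} (hA : A.Finite) :
    convexHull ℝ ((convexHull ℝ A).extremePoints ℝ) = convexHull ℝ A := by
  have hfin : ((convexHull ℝ A).extremePoints ℝ).Finite :=
    hA.subset extremePoints_convexHull_subset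
  conv_rhs => rw [← closure_convexHull_extremePoints (hA.isCompact_convexHull ℝ)
    (convex_convexHull ℝ A)]
  exact (hfin.isCompact_convexHull ℝ).isClosed.closure_eq.symm

namespace AffineMap

variable {K : Set E} {g : E →ᵃ[ℝ] ℝ}

theorem le_of_mem_convexHull {c : ℝ} (hK : ∀ v ∈ K, c ≤ g v) {x : E}
    (hx : x ∈ convexHull ℝ K) : c ≤ g x :=
  convexHull_min hK ((convex_Ici c).affine_preimage g) hx

theorem eq_zero_of_mem_convexHull (hK : ∀ v ∈ K, g v = 0) {x : E}
    (hx : x ∈ convexHull ℝ K) : g x = 0 :=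
  convexHull_min hK ((convex_singleton 0).affine_preimage g) hx

theorem mul_dist_le_of_mem_segment {m D : ℝ} (hm : 0 ≤ m) {z p x : E} (hz : g z = 0)
    (hp : m ≤ g p) (hD : dist z p ≤ D) (hx : x ∈ segment ℝ z p) :
    m * dist x z ≤ D * g x := by
  rw [segment_eq_image_lineMap] at hx
  obtain ⟨t, ⟨ht0, -⟩, rfl⟩ := hx
  calc m * dist (lineMap z p t) z = t * m * dist z p := by
        rw [dist_lineMap_left, Real.norm_of_nonneg ht0]; ring
    _ ≤ t * g p * D := by
        gcongr; exact mul_nonneg ht0 (hm.trans hp)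
    _ = D * g (lineMap z p t) := by
        rw [g.apply_lineMap, hz, lineMap_apply_module]; simp only [smul_eq_mul]; ring

theorem mul_infDist_zeroSet_le {m D : ℝ} (hm : 0 < m) (hK : ∀ v ∈ K, g v = 0 ∨ m ≤ g v)
    (hD : ∀ u ∈ K, ∀ v ∈ K, dist u v ≤ D)
    (hS : {y ∈ convexHull ℝ K | g y = 0}.Nonempty) {x : E} (hx : x ∈ convexHull ℝ K) :
    m * infDist x {y ∈ convexHull ℝ K | g y = 0} ≤ D * g x := by
  set Z := {v ∈ K | g v = 0}
  set P := {v ∈ K | m ≤ g v}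
  have hKZP : K = Z ∪ P := by
    ext v; simp only [Z, P, mem_union, mem_ofPred_eq]; have := hK v; tauto
  have hZS : convexHull ℝ Z ⊆ {y ∈ convexHull ℝ K | g y = 0} :=
    fun y hy ↦
      ⟨convexHull_mono (fun v hv ↦ hv.1) hy, eq_zero_of_mem_convexHull (fun v hv ↦ hv.2) hy⟩
  rcases P.eq_empty_or_nonempty with hP | hP
  · rw [hKZP, hP, union_empty] at hx
    have hxS := hZS hx
    rw [infDist_zero_of_mem hxS, hxS.2]; simp
  rcases Z.eq_empty_or_nonempty with hZ | hZ
  · -- `S` would lie in `conv P`, where `g ≥ m > 0`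
    obtain ⟨s, hsK, hs0⟩ := hS
    rw [hKZP, hZ, empty_union] at hsK
    linarith [le_of_mem_convexHull (fun v (hv : v ∈ P) ↦ hv.2) hsK]
  rw [hKZP, convexHull_union hZ hP] at hx
  obtain ⟨z, hz, p, hp, hxzp⟩ := mem_convexJoin.1 hx
  obtain ⟨z', hz', p', hp', hzp⟩ := convexHull_exists_dist_ge2 hz hp
  calc m * infDist x _ ≤ m * dist x z := by gcongr; exact infDist_le_dist_of_mem (hZS hz)
    _ ≤ D * g x :=
      mul_dist_le_of_mem_segment hm.le (hZS hz).2
        (le_of_mem_convexHull (fun v (hv : v ∈ P) ↦ hv.2) hp)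
        (hzp.trans (hD z' hz'.1 p' hp'.1)) hxzp

end AffineMap

end Normed

theorem EuclideanSpace.dist_le_sqrt_card {ι : Type*} [Fintype ι] {u v : EuclideanSpace ℝ ι}
    (hu : ∀ i, u i ∈ Icc (0 : ℝ) 1) (hv : ∀ i, v i ∈ Icc (0 : ℝ) 1) :
    dist u v ≤ √(Fintype.card ι) := by
  rw [EuclideanSpace.dist_eq]
  gcongr
  calc ∑ i, dist (u i) (v i) ^ 2 ≤ ∑ _i : ι, (1 : ℝ) := by
        gcongr with i
        rw [Real.dist_eq, sq_abs]
        obtain ⟨hu0, hu1⟩ := hu i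
        obtain ⟨hv0, hv1⟩ := hv i
        nlinarith
    _ = Fintype.card ι := by simp

theorem stmt10_general (V : Finset (EuclideanSpace ℝ (Fin 2)))
    (hV01 : ∀ v ∈ V, ∀ i, v i ∈ Set.Icc (0 : ℝ) 1)
    (F : Set (EuclideanSpace ℝ (Fin 2))) (hF : F = convexHull ℝ (V : Set (EuclideanSpace ℝ (Fin 2))))
    (a : EuclideanSpace ℝ (Fin 2)) (b : ℝ) (g : EuclideanSpace ℝ (Fin 2) → ℝ)
    (hg : ∀ x, g x = (inner ℝ a x : ℝ) + b)
    (m : ℝ) (hm : 0 < m)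
    (hvert : ∀ v ∈ Set.extremePoints ℝ F, g v = 0 ∨ m ≤ g v)
    (S : Set (EuclideanSpace ℝ (Fin 2))) (hS : S = {x ∈ F | g x = 0}) (hSne : S.Nonempty) :
    ∀ x ∈ F, m * Metric.infDist x S / 2 ≤ g x := by
  intro x hx
  let gA : EuclideanSpace ℝ (Fin 2) →ᵃ[ℝ] ℝ :=
    ⟨g, innerₛₗ ℝ a, fun p v ↦ by simp [hg, inner_add_right]; ring⟩
  have hKF : convexHull ℝ (F.extremePoints ℝ) = F := by
    rw [hF]; exact V.finite_toSet.convexHull_extremePoints_convexHull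
  have hD : ∀ u ∈ F.extremePoints ℝ, ∀ v ∈ F.extremePoints ℝ, dist u v ≤ 2 := by
    intro u hu v hv
    rw [hF] at hu hv
    calc dist u v ≤ √(Fintype.card (Fin 2)) :=
          EuclideanSpace.dist_le_sqrt_card (hV01 u (extremePoints_convexHull_subset hu))
            (hV01 v (extremePoints_convexHull_subset hv))
      _ ≤ 2 := by rw [Fintype.card_fin, Real.sqrt_le_left (by norm_num)]; norm_num
  subst hS
  have key :=
    AffineMap.mul_infDist_zeroSet_le (g := gA) hm hvert hD (by rwa [hKF]) (by rwa [hKF])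
  rw [hKF] at key
  change m * infDist x {y ∈ F | g y = 0} ≤ 2 * g x at key
  linarith

theorem stmt10 (V : Finset (EuclideanSpace ℝ (Fin 2))) (hV : V.Nonempty)
    (hV01 : ∀ v ∈ V, ∀ i, v i ∈ Set.Icc (0 : ℝ) 1)
    (F : Set (EuclideanSpace ℝ (Fin 2))) (hF : F = convexHull ℝ (V : Set (EuclideanSpace ℝ (Fin 2))))
    (a : EuclideanSpace ℝ (Fin 2)) (b : ℝ) (g : EuclideanSpace ℝ (Fin 2) → ℝ)
    (hg : ∀ x, g x = (inner ℝ a x : ℝ) + b)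
    (m : ℝ) (hm : 0 < m)
    (hvert : ∀ v ∈ Set.extremePoints ℝ F, g v = 0 ∨ m ≤ g v)
    (S : Set (EuclideanSpace ℝ (Fin 2))) (hS : S = {x ∈ F | g x = 0}) (hSne : S.Nonempty) :
    ∀ x ∈ F, m * Metric.infDist x S / 2 ≤ g x :=
  stmt10_general V hV01 F hF a b g hg m hm hvert S hS hSne
end

section
/- Let π : ℝ → ℝ be subadditive (π(x+y) ≤ π(x) + π(y) for all x, y), ℤ-periodic (π(x+1) = π(x) for all x), with π(0) = 0, and suppose there exist δ > 0 and constants c₁, c₂ ∈ ℝ such that π(x) = c₁·x for all x ∈ [0, δ] and π(x) = c₂·x for all x ∈ [−δ, 0]. Then π is Lipschitz continuous on ℝ. -/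
theorem stmt12 (π : ℝ → ℝ) (hsub : ∀ x y : ℝ, π (x + y) ≤ π x + π y)
    (hper : ∀ x : ℝ, π (x + 1) = π x) (h0 : π 0 = 0)
    (δ c₁ c₂ : ℝ) (hδ : 0 < δ)
    (h1 : ∀ x ∈ Set.Icc (0 : ℝ) δ, π x = c₁ * x)
    (h2 : ∀ x ∈ Set.Icc (-δ) (0 : ℝ), π x = c₂ * x) :
    ∃ L : ℝ, 0 ≤ L ∧ ∀ x y : ℝ, |π x - π y| ≤ L * |x - y| := by
  -- iterated subadditivity
  have hiter : ∀ n : ℕ, ∀ t : ℝ, π (n * t) ≤ n * π t := by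
    intro n
    induction n with
    | zero => intro t; simp [h0]
    | succ n ih =>
      intro t
      have : ((n : ℝ) + 1) * t = n * t + t := by ring
      push_cast
      rw [this]
      calc π (n * t + t) ≤ π (n * t) + π t := hsub _ _
        _ ≤ n * π t + π t := by linarith [ih t]
        _ = ((n : ℝ) + 1) * π t := by ring
  set M := max |c₁| |c₂| with hM
  have hM0 : 0 ≤ M := le_trans (abs_nonneg c₁) (le_max_left _ _)
  -- global bound: π z ≤ M * |z|
  have hbound : ∀ z : ℝ, π z ≤ M * |z| := by
    intro z
    rcases le_or_gt 0 z with hz | hz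
    · -- z ≥ 0 : π z ≤ c₁ z
      set n : ℕ := ⌈z / δ⌉₊ + 1 with hn
      have hnpos : (0 : ℝ) < n := by positivity
      have hzn0 : 0 ≤ z / n := by positivity
      have hznδ : z / n ≤ δ := by
        rw [div_le_iff₀ hnpos]
        have h1 : z / δ ≤ ⌈z / δ⌉₊ := Nat.le_ceil _
        have h2 : z ≤ δ * ⌈z / δ⌉₊ := by
          rw [div_le_iff₀ hδ] at h1; linarith
        have : (⌈z / δ⌉₊ : ℝ) ≤ n := by
          rw [hn]; push_cast; linarith
        nlinarith
      have hzeq : (n : ℝ) * (z / n) = z := by field_simp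
      have : π z ≤ n * π (z / n) := by
        calc π z = π (n * (z / n)) := by rw [hzeq]
          _ ≤ n * π (z / n) := hiter n _
      rw [h1 (z / n) ⟨hzn0, hznδ⟩] at this
      have hπ : π z ≤ c₁ * z := by
        calc π z ≤ (n : ℝ) * (c₁ * (z / n)) := this
          _ = c₁ * ((n : ℝ) * (z / n)) := by ring
          _ = c₁ * z := by rw [hzeq]
      calc π z ≤ c₁ * z := hπ
        _ ≤ |c₁ * z| := le_abs_self _
        _ = |c₁| * |z| := abs_mul _ _
        _ ≤ M * |z| := by
            apply mul_le_mul_of_nonneg_right (le_max_left _ _) (abs_nonneg z)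
    · -- z < 0 : π z ≤ c₂ z
      set n : ℕ := ⌈-z / δ⌉₊ + 1 with hn
      have hnpos : (0 : ℝ) < n := by positivity
      have hzn0 : z / n ≤ 0 := by
        apply div_nonpos_of_nonpos_of_nonneg (le_of_lt hz) (le_of_lt hnpos)
      have hznδ : -δ ≤ z / n := by
        rw [neg_le, ← neg_div]
        rw [div_le_iff₀ hnpos]
        have h1 : -z / δ ≤ ⌈-z / δ⌉₊ := Nat.le_ceil _
        have h2 : -z ≤ δ * ⌈-z / δ⌉₊ := by
          rw [div_le_iff₀ hδ] at h1; linarith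
        have : (⌈-z / δ⌉₊ : ℝ) ≤ n := by
          rw [hn]; push_cast; linarith
        nlinarith
      have hzeq : (n : ℝ) * (z / n) = z := by field_simp
      have : π z ≤ n * π (z / n) := by
        calc π z = π (n * (z / n)) := by rw [hzeq]
          _ ≤ n * π (z / n) := hiter n _
      rw [h2 (z / n) ⟨hznδ, hzn0⟩] at this
      have hπ : π z ≤ c₂ * z := by
        calc π z ≤ (n : ℝ) * (c₂ * (z / n)) := this
          _ = c₂ * ((n : ℝ) * (z / n)) := by ring
          _ = c₂ * z := by rw [hzeq]
      calc π z ≤ c₂ * z := hπ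
        _ ≤ |c₂ * z| := le_abs_self _
        _ = |c₂| * |z| := abs_mul _ _
        _ ≤ M * |z| := by
            apply mul_le_mul_of_nonneg_right (le_max_right _ _) (abs_nonneg z)
  refine ⟨M, hM0, fun x y => ?_⟩
  rw [abs_sub_le_iff]
  constructor
  · have h : π x ≤ π (x - y) + π y := by
      have := hsub (x - y) y
      simpa using this
    have := hbound (x - y)
    linarith
  · have h : π y ≤ π (y - x) + π x := by
      have := hsub (y - x) x
      simpa using this
    have h2 := hbound (y - x)
    rw [abs_sub_comm] at h2
    linarith
end

section
/- Let π be a continuous piecewise linear minimal valid function, and let π̄ : ℝ → ℝ be a continuous piecewise linear function, not identically zero, such that both π + π̄ and π − π̄ are minimal valid functions. Then there exists a minimal valid function π' with E(π) ⊊ E(π') (strict inclusion); consequently, π is not a weak facet. -/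
open Function Filter Topology

noncomputable def pairing (g : ℝ → ℝ) (y : ℝ →₀ ℕ) : ℝ := ∑ r ∈ y.support, g r * (y r : ℝ)

section Pairing

variable (g h : ℝ → ℝ) (y : ℝ →₀ ℕ)

lemma pairing_eq_sum : pairing g y = y.sum fun r n => g r * n := rfl

lemma pairing_add_right (y₁ y₂ : ℝ →₀ ℕ) :
    pairing g (y₁ + y₂) = pairing g y₁ + pairing g y₂ := by
  simp only [pairing_eq_sum]
  exact Finsupp.sum_add_index' (fun _ => by simp) fun _ _ _ => by push_cast; ring

lemma pairing_single (a : ℝ) (n : ℕ) : pairing g (Finsupp.single a n) = g a * n := by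
  simp only [pairing_eq_sum]
  exact Finsupp.sum_single_index (by simp)

lemma pairing_eq_erase_add (c : ℝ) : pairing g y = pairing g (y.erase c) + g c * y c := by
  conv_lhs => rw [← Finsupp.single_add_erase c y]
  rw [pairing_add_right, pairing_single, add_comm]

lemma pairing_add_left : pairing (fun x => g x + h x) y = pairing g y + pairing h y := by
  simp only [pairing, add_mul, Finset.sum_add_distrib]

lemma pairing_sub_left : pairing (fun x => g x - h x) y = pairing g y - pairing h y := by
  simp only [pairing, sub_mul, Finset.sum_sub_distrib]

lemma pairing_const_mul (t : ℝ) : pairing (fun x => t * g x) y = t * pairing g y := by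
  simp only [pairing, mul_assoc, ← Finset.mul_sum]

lemma pairing_nonneg {g} (hg : ∀ x, 0 ≤ g x) : 0 ≤ pairing g y :=
  Finset.sum_nonneg fun r _ => mul_nonneg (hg r) (Nat.cast_nonneg _)

lemma pairing_update (c t : ℝ) :
    pairing (update g c t) y = pairing g y + (t - g c) * y c := by
  rw [pairing_eq_erase_add _ y c, pairing_eq_erase_add g y c, update_self]
  have : pairing (update g c t) (y.erase c) = pairing g (y.erase c) :=
    Finset.sum_congr rfl fun r hr => by
      rw [update_of_ne (by rintro rfl; simp at hr)]
  rw [this]; ring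

end Pairing

section Feasible

variable {f : ℝ}

lemma feasible_of_pairing_id_eq {y : ℝ →₀ ℕ} (h : pairing id y = f) : Feasible f y :=
  ⟨0, by change pairing id y - f = _; simp [h]⟩

lemma Feasible.of_pairing_id_eq_add {y y' : ℝ →₀ ℕ} (hy : Feasible f y) (n : ℤ)
    (h : pairing id y' = pairing id y + n) : Feasible f y' := by
  obtain ⟨z, hz⟩ := hy
  refine ⟨z + n, ?_⟩
  change pairing id y' - f = _
  change pairing id y - f = _ at hz
  push_cast; linarith

lemma Feasible.pairing_id_eq {y : ℝ →₀ ℕ} (hy : Feasible f y) : ∃ z : ℤ, pairing id y = f + z := by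
  obtain ⟨z, hz⟩ := hy
  exact ⟨z, by change pairing id y - f = _ at hz; linarith⟩

lemma feasible_pair (x : ℝ) : Feasible f (Finsupp.single x 1 + Finsupp.single (f - x) 1) :=
  feasible_of_pairing_id_eq <| by
    rw [pairing_add_right, pairing_single, pairing_single]; simp

end Feasible

lemma Valid.one_le_pairing {f : ℝ} {g : ℝ → ℝ} (hg : Valid f g) {y : ℝ →₀ ℕ} (hy : Feasible f y) :
    1 ≤ pairing g y :=
  hg.2 y hy

lemma Valid.one_le_add_map_sub {f : ℝ} {g : ℝ → ℝ} (hg : Valid f g) (x : ℝ) :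
    1 ≤ g x + g (f - x) := by
  simpa [pairing_add_right, pairing_single] using hg.one_le_pairing (feasible_pair x)

lemma map_natCast_mul_le {g : ℝ → ℝ} (h0 : g 0 = 0) (hsub : ∀ a b, g (a + b) ≤ g a + g b)
    (n : ℕ) (x : ℝ) : g (n * x) ≤ n * g x := by
  simpa using Finset.le_sum_of_subadditive g h0.le hsub (Finset.range n) fun _ => x

lemma map_sum_natCast_mul_le {ι : Type*} {g : ℝ → ℝ} (h0 : g 0 = 0)
    (hsub : ∀ a b, g (a + b) ≤ g a + g b) (s : Finset ι) (c : ι → ℕ) (x : ι → ℝ) :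
    g (∑ i ∈ s, x i * c i) ≤ ∑ i ∈ s, g (x i) * c i :=
  (Finset.le_sum_of_subadditive g h0.le hsub s _).trans <|
    Finset.sum_le_sum fun i _ => by
      simpa only [mul_comm] using map_natCast_mul_le h0 hsub (c i) (x i)

lemma nonneg_of_subadditive_of_bddBelow {g : ℝ → ℝ} (h0 : g 0 = 0)
    (hsub : ∀ a b, g (a + b) ≤ g a + g b) (hbdd : BddBelow (Set.range g)) (x : ℝ) : 0 ≤ g x := by
  by_contra! hx
  obtain ⟨m, hm⟩ := hbdd
  obtain ⟨n, hn⟩ := exists_nat_gt (m / g x)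
  rw [div_lt_iff_of_neg hx] at hn
  linarith [map_natCast_mul_le h0 hsub n x, hm ⟨n * x, rfl⟩]

lemma nonneg_of_subadditive_of_periodic {g : ℝ → ℝ} (hc : Continuous g) (hper : Periodic g 1)
    (h0 : g 0 = 0) (hsub : ∀ a b, g (a + b) ≤ g a + g b) (x : ℝ) : 0 ≤ g x :=
  nonneg_of_subadditive_of_bddBelow h0 hsub (hper.compact_of_continuous one_ne_zero hc).bddBelow x

lemma exists_lt_forall_le_natCast_mul {a : ℕ → ℝ} {c : ℝ} (hc : 0 < c)
    (hlt : ∀ K : ℕ, 1 ≤ K → a K < K * c) (hle : ∀ K, a K ≤ 1) :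
    ∃ w, 0 ≤ w ∧ w < c ∧ ∀ K : ℕ, 1 ≤ K → a K ≤ K * w := by
  obtain ⟨N, hN⟩ := exists_nat_gt (2 / c)
  have hN1 : 1 ≤ N := by
    have : (0 : ℝ) < N := lt_trans (by positivity) hN
    exact_mod_cast this
  obtain ⟨m, hm, hmax⟩ := Finset.exists_max_image (Finset.Icc 1 N) (fun K => a K / K)
    ⟨1, Finset.mem_Icc.2 ⟨le_rfl, hN1⟩⟩
  have hm1 : (0 : ℝ) < m := by exact_mod_cast (Finset.mem_Icc.1 hm).1
  refine ⟨max (c / 2) (a m / m), by positivity, max_lt (by linarith) ?_, fun K hK => ?_⟩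
  · rw [div_lt_iff₀ hm1, mul_comm]
    exact hlt m (Finset.mem_Icc.1 hm).1
  have hK0 : (0 : ℝ) < K := by exact_mod_cast hK
  rcases le_or_gt K N with hKN | hKN
  · have := (hmax K (Finset.mem_Icc.2 ⟨hK, hKN⟩)).trans (le_max_right (c / 2) (a m / m))
    rwa [div_le_iff₀ hK0, mul_comm] at this
  · have hNK : (N : ℝ) ≤ K := by exact_mod_cast hKN.le
    have h2 : 1 < N * (c / 2) := by
      rw [div_lt_iff₀ hc] at hN; linarith
    calc a K ≤ 1 := hle K
      _ ≤ K * (c / 2) := by nlinarith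
      _ ≤ K * max (c / 2) (a m / m) := by gcongr; exact le_max_left _ _

lemma valid_of_subadditive {f : ℝ} {g : ℝ → ℝ} (hnn : ∀ x, 0 ≤ g x) (h0 : g 0 = 0)
    (hsub : ∀ a b, g (a + b) ≤ g a + g b) (hper : Periodic g 1) (hf : 1 ≤ g f) :
    Valid f g := by
  refine ⟨hnn, fun y hy => ?_⟩
  obtain ⟨z, hz⟩ := hy.pairing_id_eq
  have key := map_sum_natCast_mul_le h0 hsub y.support y id
  change g (pairing id y) ≤ pairing g y at key
  have hshift : g (f + z) = g f := by simpa using hper.int_mul z f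
  rw [hz, hshift] at key
  exact hf.trans key

namespace MinimalValid

variable {f : ℝ} {π : ℝ → ℝ}

lemma eq_of_le (hπ : MinimalValid f π) {π' : ℝ → ℝ} (hv : Valid f π') (hle : ∀ x, π' x ≤ π x) :
    π' = π := by
  by_contra hne
  exact hπ.2 ⟨π', hv, hle, hne⟩

/-- `h` says that `π`, lowered to `t` at the single point `c`, is still valid. -/
lemma le_of_forall_feasible (hπ : MinimalValid f π) {c t : ℝ} (ht : 0 ≤ t)
    (h : ∀ y, Feasible f y → 1 ≤ pairing π y + (t - π c) * y c) : π c ≤ t := by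
  by_contra! hlt
  have hle : ∀ x, update π c t x ≤ π x := fun x => by
    rcases eq_or_ne x c with rfl | hx
    · simpa using hlt.le
    · simp [hx]
  have hv : Valid f (update π c t) := by
    refine ⟨fun x => ?_, fun y hy => ?_⟩
    · rcases eq_or_ne x c with rfl | hx
      · simpa using ht
      · simpa [hx] using hπ.1.1 x
    · change 1 ≤ pairing (update π c t) y
      rw [pairing_update]
      exact h y hy
  have := congrFun (hπ.eq_of_le hv hle) c
  simp only [update_self] at this
  linarith

lemma map_zero_s15 (hπ : MinimalValid f π) : π 0 = 0 := by
  refine le_antisymm (hπ.le_of_forall_feasible le_rfl fun y hy => ?_) (hπ.1.1 0)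
  have hy' : Feasible f (y.erase 0) :=
    hy.of_pairing_id_eq_add 0 (by simp [pairing_eq_erase_add id y 0])
  have := hπ.1.one_le_pairing hy'
  rw [pairing_eq_erase_add π y 0]
  linarith

lemma le_one (hπ : MinimalValid f π) (c : ℝ) : π c ≤ 1 := by
  refine hπ.le_of_forall_feasible zero_le_one fun y hy => ?_
  rcases Nat.eq_zero_or_pos (y c) with hc | hc
  · simpa [hc] using hπ.1.one_le_pairing hy
  · have hcr : (1 : ℝ) ≤ y c := by exact_mod_cast hc
    have := pairing_nonneg (y.erase c) hπ.1.1
    rw [pairing_eq_erase_add π y c]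
    nlinarith

lemma map_add_int_le (hπ : MinimalValid f π) (x : ℝ) (n : ℤ) : π (x + n) ≤ π x := by
  refine hπ.le_of_forall_feasible (hπ.1.1 x) fun y hy => ?_
  set y' := y.erase (x + n) + Finsupp.single x (y (x + n))
  have hy' : Feasible f y' := hy.of_pairing_id_eq_add (-n * y (x + n)) <| by
    simp only [y', pairing_add_right, pairing_single, pairing_eq_erase_add id y (x + n), id]
    push_cast; ring
  have := hπ.1.one_le_pairing hy'
  simp only [y', pairing_add_right, pairing_single] at this
  rw [pairing_eq_erase_add π y (x + n)]
  linarith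

lemma periodic_s15 (hπ : MinimalValid f π) : Periodic π 1 := fun x =>
  le_antisymm (by exact_mod_cast hπ.map_add_int_le x 1)
    (by simpa using hπ.map_add_int_le (x + 1) (-1))

lemma subadditive_s15 (hπ : MinimalValid f π) (a b : ℝ) : π (a + b) ≤ π a + π b := by
  refine hπ.le_of_forall_feasible (add_nonneg (hπ.1.1 a) (hπ.1.1 b)) fun y hy => ?_
  set k := y (a + b)
  set y' := y.erase (a + b) + Finsupp.single a k + Finsupp.single b k
  have hy' : Feasible f y' := hy.of_pairing_id_eq_add 0 <| by
    simp only [y', pairing_add_right, pairing_single, pairing_eq_erase_add id y (a + b), id]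
    push_cast; ring
  have := hπ.1.one_le_pairing hy'
  simp only [y', pairing_add_right, pairing_single] at this
  rw [pairing_eq_erase_add π y (a + b)]
  linarith

lemma map_f (hπ : MinimalValid f π) : π f = 1 := by
  have := hπ.1.one_le_add_map_sub 0
  rw [hπ.map_zero_s15, sub_zero, zero_add] at this
  exact le_antisymm (hπ.le_one f) this

/-- The function `x ↦ ⨅ k, π (x - k z) + k w` is valid and lies below `π`; by minimality it is
`π`, and its value at `z` is at most `w`. -/
lemma le_of_forall_natCast_mul (hπ : MinimalValid f π) {z w : ℝ} (hw : 0 ≤ w)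
    (hK : ∀ K : ℕ, 1 ≤ π (f - K * z) + K * w) : π z ≤ w := by
  set π' : ℝ → ℝ := fun x => ⨅ k : ℕ, π (x - k * z) + k * w
  have hterm : ∀ x (k : ℕ), 0 ≤ π (x - k * z) + k * w := fun x k =>
    add_nonneg (hπ.1.1 _) (mul_nonneg k.cast_nonneg hw)
  have hbdd : ∀ x, BddBelow (Set.range fun k : ℕ => π (x - k * z) + k * w) := fun x =>
    ⟨0, by rintro _ ⟨k, rfl⟩; exact hterm x k⟩
  have hle_term : ∀ x (k : ℕ), π' x ≤ π (x - k * z) + k * w := fun x k => ciInf_le (hbdd x) k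
  have hnn : ∀ x, 0 ≤ π' x := fun x => le_ciInf (hterm x)
  have hle : ∀ x, π' x ≤ π x := fun x => by simpa using hle_term x 0
  have hsub : ∀ a b, π' (a + b) ≤ π' a + π' b := fun a b => by
    have key : ∀ k l : ℕ, π' (a + b) ≤ (π (a - k * z) + k * w) + (π (b - l * z) + l * w) :=
      fun k l => by
        have h1 := hle_term (a + b) (k + l)
        have h2 := hπ.subadditive_s15 (a - k * z) (b - l * z)
        rw [show a - k * z + (b - l * z) = a + b - ((k + l : ℕ) : ℝ) * z by push_cast; ring] at h2
        push_cast at h1 h2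
        linarith
    have ha : ∀ l : ℕ, π' (a + b) - (π (b - l * z) + l * w) ≤ π' a := fun l =>
      le_ciInf fun k => by linarith [key k l]
    have hb : π' (a + b) - π' a ≤ π' b := le_ciInf fun l => by linarith [ha l]
    linarith
  have hper : Periodic π' 1 := fun x => by
    simp only [π', show ∀ k : ℕ, x + 1 - k * z = x - k * z + 1 from fun k => by ring,
      hπ.periodic_s15 _]
  have hv : Valid f π' := valid_of_subadditive hnn
    (le_antisymm (by simpa [hπ.map_zero_s15] using hle 0) (hnn 0)) hsub hper (le_ciInf hK)
  have hz : π' z ≤ w := by simpa [hπ.map_zero_s15] using hle_term z 1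
  rwa [hπ.eq_of_le hv hle] at hz

lemma add_map_sub_eq_one (hπ : MinimalValid f π) (z : ℝ) : π z + π (f - z) = 1 := by
  refine le_antisymm ?_ (hπ.1.one_le_add_map_sub z)
  by_contra! hgt
  -- the strict inequality leaves room for some `w < π z` in `le_of_forall_natCast_mul`
  have hz : 0 < π z := by linarith [hπ.le_one (f - z)]
  have hlt : ∀ K : ℕ, 1 ≤ K → 1 - π (f - K * z) < K * π z := fun K hK => by
    have hsplit := hπ.subadditive_s15 (f - K * z) ((K - 1 : ℕ) * z)
    rw [show f - K * z + ((K - 1 : ℕ) : ℝ) * z = f - z by push_cast [hK]; ring] at hsplit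
    have := map_natCast_mul_le hπ.map_zero_s15 hπ.subadditive_s15 (K - 1) z
    push_cast [hK] at this hsplit
    linarith
  obtain ⟨w, hw0, hwz, hw⟩ := exists_lt_forall_le_natCast_mul (a := fun K => 1 - π (f - K * z))
    hz hlt fun K => by linarith [hπ.1.1 (f - K * z)]
  refine absurd (hπ.le_of_forall_natCast_mul hw0 fun K => ?_) (not_le.2 hwz)
  rcases Nat.eq_zero_or_pos K with rfl | hK
  · simp [hπ.map_f]
  · linarith [hw K hK]

end MinimalValid

lemma minimalValid_of_subadditive_s15 {f : ℝ} {g : ℝ → ℝ} (hnn : ∀ x, 0 ≤ g x) (h0 : g 0 = 0)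
    (hsub : ∀ a b, g (a + b) ≤ g a + g b) (hper : Periodic g 1)
    (hsym : ∀ x, g x + g (f - x) = 1) : MinimalValid f g := by
  have hv : Valid f g := valid_of_subadditive hnn h0 hsub hper (by simpa [h0] using (hsym 0).ge)
  refine ⟨hv, fun ⟨g', hv', hle, hne⟩ => hne (funext fun x => le_antisymm (hle x) ?_)⟩
  linarith [hv'.one_le_add_map_sub x, hle (f - x), hsym x]

def addDefect (g : ℝ → ℝ) (x y : ℝ) : ℝ := g x + g y - g (x + y)

lemma continuous_addDefect {g : ℝ → ℝ} (hg : Continuous g) :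
    Continuous fun w : ℝ × ℝ => addDefect g w.1 w.2 := by
  unfold addDefect; fun_prop

lemma Function.Periodic.addDefect_fract {g : ℝ → ℝ} (hg : Periodic g 1) (x y : ℝ) :
    addDefect g (Int.fract x) (Int.fract y) = addDefect g x y := by
  have h := fun (z : ℝ) (n : ℤ) => by simpa using hg.sub_int_mul_eq (x := z) n
  simp only [addDefect, Int.fract, h,
    show x - ⌊x⌋ + (y - ⌊y⌋) = x + y - ((⌊x⌋ + ⌊y⌋ : ℤ) : ℝ) by push_cast; ring]

lemma mem_Eset_iff {g : ℝ → ℝ} {p : ℝ × ℝ} : p ∈ Eset g ↔ addDefect g p.1 p.2 = 0 :=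
  sub_eq_zero.symm

lemma addDefect_add_mul (g h : ℝ → ℝ) (t x y : ℝ) :
    addDefect (fun z => g z + t * h z) x y = addDefect g x y + t * addDefect h x y := by
  simp only [addDefect]; ring

lemma exists_addDefect_ne_zero {g : ℝ → ℝ} (hc : Continuous g) (hper : Periodic g 1)
    (h0 : g 0 = 0) (hne : g ≠ 0) : ∃ x y, addDefect g x y ≠ 0 := by
  by_contra! hadd
  have hadd' : ∀ a b, g (a + b) = g a + g b := fun a b => by
    linarith [hadd a b, show addDefect g a b = g a + g b - g (a + b) from rfl]
  refine hne (funext fun x => le_antisymm ?_ ?_)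
  · have := nonneg_of_subadditive_of_periodic hc.neg (fun x => by simp [hper x]) (by simp [h0])
      (fun a b => by simp [hadd']) x
    simpa using this
  · exact nonneg_of_subadditive_of_periodic hc hper h0 (fun a b => (hadd' a b).le) x

def PosHomogeneous (k : ℝ → ℝ) : Prop := ∀ ⦃c : ℝ⦄, 0 ≤ c → ∀ u, k (c * u) = c * k u

lemma PosHomogeneous.map_add {k : ℝ → ℝ} (hk : PosHomogeneous k) {u v : ℝ} (huv : 0 ≤ u * v) :
    k (u + v) = k u + k v := by
  rcases mul_nonneg_iff.1 huv with ⟨hu, hv⟩ | ⟨hu, hv⟩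
  · have h := fun (w : ℝ) (hw : 0 ≤ w) => by simpa using hk hw 1
    rw [h u hu, h v hv, h (u + v) (add_nonneg hu hv)]; ring
  · have h := fun (w : ℝ) (hw : w ≤ 0) => by simpa using hk (neg_nonneg.2 hw) (-1)
    rw [h u hu, h v hv, h (u + v) (add_nonpos hu hv)]; ring

lemma posHomogeneous_kink (a b : ℝ) : PosHomogeneous fun u => a * max u 0 + b * min u 0 :=
  fun c hc u => by
    have hmax : max (c * u) 0 = c * max u 0 := by rw [mul_max_of_nonneg _ _ hc, mul_zero]
    have hmin : min (c * u) 0 = c * min u 0 := by rw [mul_min_of_nonneg _ _ hc, mul_zero]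
    simp only [hmax, hmin]; ring

/-- Local model of `addDefect g` near `(x, y)`, built from the germs of `g` at `x`, `y`, `x + y`. -/
def mixedDefect (k₁ k₂ k₃ : ℝ → ℝ) (s t : ℝ) : ℝ := k₁ s + k₂ t - k₃ (s + t)

/-- Positively homogeneous, and additive on each of the six sectors cut out by the lines `s = 0`,
`t = 0` and `s + t = 0`. -/
structure SectorLinear (P : ℝ → ℝ → ℝ) : Prop where
  map_mul : ∀ ⦃c : ℝ⦄, 0 ≤ c → ∀ s t, P (c * s) (c * t) = c * P s t
  map_add : ∀ ⦃s₁ t₁ s₂ t₂ : ℝ⦄, 0 ≤ s₁ * s₂ → 0 ≤ t₁ * t₂ → 0 ≤ (s₁ + t₁) * (s₂ + t₂) →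
    P (s₁ + s₂) (t₁ + t₂) = P s₁ t₁ + P s₂ t₂

lemma sectorLinear_mixedDefect {k₁ k₂ k₃ : ℝ → ℝ} (h₁ : PosHomogeneous k₁)
    (h₂ : PosHomogeneous k₂) (h₃ : PosHomogeneous k₃) : SectorLinear (mixedDefect k₁ k₂ k₃) where
  map_mul c hc s t := by
    simp only [mixedDefect, h₁ hc, h₂ hc, ← mul_add, h₃ hc]; ring
  map_add s₁ t₁ s₂ t₂ hs ht hst := by
    simp only [mixedDefect]
    rw [h₁.map_add hs, h₂.map_add ht, show s₁ + s₂ + (t₁ + t₂) = s₁ + t₁ + (s₂ + t₂) by ring,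
      h₃.map_add hst]
    ring

lemma eventually_add_mul_abs_lt {L A B : ℝ} (hlt : L * |B| < A) :
    ∀ᶠ ε in 𝓝 (0 : ℝ), (L + ε) * |B| < A := by
  have hcont : Continuous fun ε : ℝ => (L + ε) * |B| := by fun_prop
  exact (hcont.tendsto 0).eventually (gt_mem_nhds (by simpa using hlt))

lemma eventually_add_mul_abs_le {L A B : ℝ} (hle : L * |B| ≤ A) (htight : L * |B| = A → B = 0) :
    ∀ᶠ ε in 𝓝[>] (0 : ℝ), (L + ε) * |B| ≤ A := by
  rcases eq_or_ne B 0 with rfl | hB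
  · exact Eventually.of_forall fun ε => by simpa using hle
  exact nhdsWithin_le_nhds <| (eventually_add_mul_abs_lt (lt_of_le_of_ne hle (mt htight hB))).mono
    fun _ h => h.le

lemma add_mul_abs_add_le {M q₁ q₂ p₁ p₂ : ℝ} (hM : 0 ≤ M) (h₁ : M * |q₁| ≤ p₁)
    (h₂ : M * |q₂| ≤ p₂) : M * |q₁ + q₂| ≤ p₁ + p₂ :=
  calc M * |q₁ + q₂| ≤ M * |q₁| + M * |q₂| := by
        rw [← mul_add]; exact mul_le_mul_of_nonneg_left (abs_add_le _ _) hM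
    _ ≤ p₁ + p₂ := add_le_add h₁ h₂

/-- On each of the six rays the margin is positive; every point is a nonnegative combination of
two adjacent rays, on whose sector both functions are linear. -/
lemma SectorLinear.exists_margin {P Q : ℝ → ℝ → ℝ} (hP : SectorLinear P) (hQ : SectorLinear Q)
    {L : ℝ} (hL : 0 ≤ L) (hle : ∀ s t, L * |Q s t| ≤ P s t)
    (htight : ∀ s t, L * |Q s t| = P s t → Q s t = 0) :
    ∃ ε > 0, ∀ s t, (L + ε) * |Q s t| ≤ P s t := by
  have line : ∀ s₀ t₀, ∀ᶠ ε in 𝓝[>] (0 : ℝ), ∀ c, (L + ε) * |Q (c * s₀) (c * t₀)| ≤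
      P (c * s₀) (c * t₀) := fun s₀ t₀ => by
    filter_upwards [eventually_add_mul_abs_le (hle s₀ t₀) (htight s₀ t₀),
      eventually_add_mul_abs_le (hle (-s₀) (-t₀)) (htight (-s₀) (-t₀))] with ε hpos hneg c
    rcases le_total 0 c with hc | hc
    · rw [hP.map_mul hc, hQ.map_mul hc, abs_mul, abs_of_nonneg hc]
      nlinarith [mul_le_mul_of_nonneg_left hpos hc]
    · have hc' : 0 ≤ -c := neg_nonneg.2 hc
      rw [show c * s₀ = -c * -s₀ by ring, show c * t₀ = -c * -t₀ by ring,
        hP.map_mul hc', hQ.map_mul hc', abs_mul, abs_of_nonneg hc']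
      nlinarith [mul_le_mul_of_nonneg_left hneg hc']
  obtain ⟨ε, ⟨h₁, h₂, h₃⟩, hε⟩ :=
    ((line 1 0).and ((line 0 1).and (line 1 (-1)))).and self_mem_nhdsWithin |>.exists
  refine ⟨ε, hε, fun s t => ?_⟩
  have hM : 0 ≤ L + ε := add_nonneg hL (le_of_lt hε)
  have axis₁ : ∀ c, (L + ε) * |Q c 0| ≤ P c 0 := fun c => by simpa using h₁ c
  have axis₂ : ∀ c, (L + ε) * |Q 0 c| ≤ P 0 c := fun c => by simpa using h₂ c
  have diag : ∀ c, (L + ε) * |Q c (-c)| ≤ P c (-c) := fun c => by simpa using h₃ c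
  have split : ∀ {s₁ t₁ s₂ t₂ : ℝ}, 0 ≤ s₁ * s₂ → 0 ≤ t₁ * t₂ → 0 ≤ (s₁ + t₁) * (s₂ + t₂) →
      s₁ + s₂ = s → t₁ + t₂ = t → (L + ε) * |Q s₁ t₁| ≤ P s₁ t₁ →
      (L + ε) * |Q s₂ t₂| ≤ P s₂ t₂ → (L + ε) * |Q s t| ≤ P s t := by
    rintro s₁ t₁ s₂ t₂ hs ht hst rfl rfl h₁ h₂
    rw [hP.map_add hs ht hst, hQ.map_add hs ht hst]
    exact add_mul_abs_add_le hM h₁ h₂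
  rcases le_or_gt 0 (s * t) with hst | hst
  · exact split (by simp) (by simp) (by simpa using hst) (add_zero s) (zero_add t)
      (axis₁ s) (axis₂ t)
  rcases le_or_gt ((s + t) * t) 0 with hB | hB
  · exact split (s₁ := s + t) (t₁ := 0) (s₂ := -t) (t₂ := t) (by nlinarith) (by simp) (by simp)
      (by ring) (zero_add t) (axis₁ _) (by simpa using diag (-t))
  rcases le_or_gt ((s + t) * s) 0 with hC | hC
  · exact split (s₁ := 0) (t₁ := s + t) (s₂ := s) (t₂ := -s) (by simp) (by nlinarith) (by simp)
      (zero_add s) (by ring) (axis₂ _) (diag s)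
  nlinarith [mul_pos hB hC, sq_nonneg (s + t)]

namespace ContPiecewiseLinear

variable {g : ℝ → ℝ}

lemma exists_posHomogeneous_germ (hg : ContPiecewiseLinear g) (x : ℝ) :
    ∃ k, PosHomogeneous k ∧ ∀ᶠ z in 𝓝 x, g z = g x + k (z - x) := by
  obtain ⟨⟨B, hBc, hBd, hBaff⟩, hcont⟩ := hg
  obtain ⟨ε, hε, hiso⟩ : ∃ ε > 0, ∀ y ∈ B, |y - x| < ε → y = x := by
    by_cases hx : x ∈ B
    · exact hBd x hx
    · obtain ⟨ε, hε, hball⟩ := Metric.isOpen_iff.1 hBc.isOpen_compl x hx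
      exact ⟨ε, hε, fun y hy hyx => absurd hy (hball (by simpa [Real.dist_eq] using hyx))⟩
  have affine : ∀ a b, a < b → Set.Ioo a b ⊆ Bᶜ → ∃ α β, ∀ z ∈ Set.Icc a b, g z = α * z + β := by
    intro a b hab hsub
    have hm : (a + b) / 2 ∈ Set.Ioo a b := ⟨by linarith, by linarith⟩
    obtain ⟨α, β, hαβ⟩ := hBaff _ (hsub hm)
    have hEq : Set.EqOn g (fun z => α * z + β) (closure (Set.Ioo a b)) :=
      Set.EqOn.closure
        (fun z hz => hαβ z (isPreconnected_Ioo.subset_connectedComponentIn hm hsub hz))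
        hcont (by fun_prop)
    rw [closure_Ioo hab.ne] at hEq
    exact ⟨α, β, hEq⟩
  have hoff : ∀ y, y ≠ x → |y - x| < ε → y ∉ B := fun y hyx hy hyB => hyx (hiso y hyB hy)
  obtain ⟨α₁, β₁, h₁⟩ := affine x (x + ε) (by linarith) fun y hy =>
    hoff y hy.1.ne' (abs_lt.2 ⟨by linarith [hy.1], by linarith [hy.2]⟩)
  obtain ⟨α₂, β₂, h₂⟩ := affine (x - ε) x (by linarith) fun y hy =>
    hoff y hy.2.ne (abs_lt.2 ⟨by linarith [hy.1], by linarith [hy.2]⟩)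
  refine ⟨fun u => α₁ * max u 0 + α₂ * min u 0, posHomogeneous_kink α₁ α₂, ?_⟩
  filter_upwards [Ioo_mem_nhds (show x - ε < x by linarith) (show x < x + ε by linarith)]
    with z hz
  rcases le_total x z with hxz | hzx
  · rw [h₁ z ⟨hxz, hz.2.le⟩, h₁ x ⟨le_rfl, by linarith⟩, max_eq_left (sub_nonneg.2 hxz),
      min_eq_right (sub_nonneg.2 hxz)]
    ring
  · rw [h₂ z ⟨hz.1.le, hzx⟩, h₂ x ⟨by linarith, le_rfl⟩, max_eq_right (sub_nonpos.2 hzx),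
      min_eq_left (sub_nonpos.2 hzx)]
    ring

lemma exists_sectorLinear_addDefect_germ (hg : ContPiecewiseLinear g) (x y : ℝ) :
    ∃ P, SectorLinear P ∧
      ∀ᶠ w in 𝓝 (x, y), addDefect g w.1 w.2 = addDefect g x y + P (w.1 - x) (w.2 - y) := by
  obtain ⟨k₁, hk₁, h₁⟩ := hg.exists_posHomogeneous_germ x
  obtain ⟨k₂, hk₂, h₂⟩ := hg.exists_posHomogeneous_germ y
  obtain ⟨k₃, hk₃, h₃⟩ := hg.exists_posHomogeneous_germ (x + y)
  refine ⟨mixedDefect k₁ k₂ k₃, sectorLinear_mixedDefect hk₁ hk₂ hk₃, ?_⟩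
  filter_upwards [(continuous_fst.tendsto (x, y)).eventually h₁,
    (continuous_snd.tendsto (x, y)).eventually h₂,
    ((continuous_fst.add continuous_snd).tendsto (x, y)).eventually h₃] with w e₁ e₂ e₃
  change g (w.1 + w.2) = g (x + y) + k₃ (w.1 + w.2 - (x + y)) at e₃
  simp only [addDefect, mixedDefect, e₁, e₂, e₃,
    show w.1 + w.2 - (x + y) = w.1 - x + (w.2 - y) by ring]
  ring

end ContPiecewiseLinear

lemma IsCompact.exists_pos_forall_of_eventually {X : Type*} [TopologicalSpace X] {K : Set X}
    (hK : IsCompact K) {R : ℝ → X → Prop} (hmono : ∀ ⦃ε ε' x⦄, ε' ≤ ε → R ε x → R ε' x)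
    (hloc : ∀ x ∈ K, ∃ ε > 0, ∀ᶠ y in 𝓝 x, R ε y) : ∃ ε > 0, ∀ x ∈ K, R ε x := by
  set U : ℕ → Set X := fun n => interior {y | R (1 / (n + 1)) y}
  have hcover : K ⊆ ⋃ n, U n := fun x hx => by
    obtain ⟨ε, hε, hev⟩ := hloc x hx
    obtain ⟨n, hn⟩ := exists_nat_one_div_lt hε
    exact Set.mem_iUnion.2 ⟨n, mem_interior_iff_mem_nhds.2 (hev.mono fun y => hmono hn.le)⟩
  have hdir : Directed (· ⊆ ·) U := Monotone.directed_le fun m n hmn =>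
    interior_mono fun y => hmono (Nat.one_div_le_one_div hmn)
  obtain ⟨n, hn⟩ := hK.elim_directed_cover U (fun _ => isOpen_interior) hcover hdir
  exact ⟨1 / (n + 1), by positivity, fun x hx => interior_subset (hn hx)⟩

lemma exists_margin_nhds_of_lt {X : Type*} [TopologicalSpace X] {F G : X → ℝ}
    (hF : Continuous F) (hG : Continuous G) {L : ℝ} {v : X} (h : L * |G v| < F v) :
    ∃ ε > 0, ∀ᶠ w in 𝓝 v, (L + ε) * |G w| ≤ F w := by
  obtain ⟨ε, hlt, hε⟩ := ((eventually_add_mul_abs_lt h).filter_mono nhdsWithin_le_nhds |>.and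
    (self_mem_nhdsWithin (s := Set.Ioi 0))).exists
  have hcont : Continuous fun w => (L + ε) * |G w| := by fun_prop
  exact ⟨ε, hε, (hcont.continuousAt.eventually_lt hF.continuousAt hlt).mono fun _ h => h.le⟩

section Margin

variable {p q : ℝ → ℝ} {L : ℝ}

lemma exists_margin_nhds (hp : ContPiecewiseLinear p) (hq : ContPiecewiseLinear q) (hL : 0 ≤ L)
    (hle : ∀ x y, L * |addDefect q x y| ≤ addDefect p x y)
    (htight : ∀ x y, L * |addDefect q x y| = addDefect p x y → addDefect q x y = 0)
    (v : ℝ × ℝ) :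
    ∃ ε > 0, ∀ᶠ w in 𝓝 v, (L + ε) * |addDefect q w.1 w.2| ≤ addDefect p w.1 w.2 := by
  obtain ⟨x, y⟩ := v
  rcases (hle x y).lt_or_eq with hlt | heq
  · exact exists_margin_nhds_of_lt (continuous_addDefect hp.2) (continuous_addDefect hq.2) hlt
  have hq0 := htight x y heq
  have hp0 : addDefect p x y = 0 := by rw [← heq, hq0, abs_zero, mul_zero]
  obtain ⟨P, hP, hPe⟩ := hp.exists_sectorLinear_addDefect_germ x y
  obtain ⟨Q, hQ, hQe⟩ := hq.exists_sectorLinear_addDefect_germ x y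
  simp only [hp0, hq0, zero_add] at hPe hQe
  have hloc : ∀ᶠ w in 𝓝 (x, y), L * |Q (w.1 - x) (w.2 - y)| ≤ P (w.1 - x) (w.2 - y) ∧
      (L * |Q (w.1 - x) (w.2 - y)| = P (w.1 - x) (w.2 - y) → Q (w.1 - x) (w.2 - y) = 0) := by
    filter_upwards [hPe, hQe] with w e₁ e₂
    rw [← e₁, ← e₂]
    exact ⟨hle _ _, htight _ _⟩
  -- by homogeneity, the local comparison of the germs holds globally
  have hglob : ∀ s t, L * |Q s t| ≤ P s t ∧ (L * |Q s t| = P s t → Q s t = 0) := by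
    intro s t
    have hray : Tendsto (fun c : ℝ => (x + c * s, y + c * t)) (𝓝[>] 0) (𝓝 (x, y)) :=
      (Continuous.tendsto' (by fun_prop) 0 (x, y) (by simp)).mono_left nhdsWithin_le_nhds
    obtain ⟨c, ⟨hle', htight'⟩, hc⟩ := ((hray.eventually hloc).and self_mem_nhdsWithin).exists
    simp only [add_sub_cancel_left, hP.map_mul hc.le, hQ.map_mul hc.le, abs_mul,
      abs_of_pos hc] at hle' htight'
    refine ⟨le_of_mul_le_mul_left (by linarith) hc, fun h => ?_⟩
    exact (mul_eq_zero.1 (htight' (by rw [← h]; ring))).resolve_left hc.ne'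
  obtain ⟨ε, hε, hm⟩ := hP.exists_margin hQ hL (fun s t => (hglob s t).1) fun s t => (hglob s t).2
  refine ⟨ε, hε, ?_⟩
  filter_upwards [hPe, hQe] with w e₁ e₂
  rw [e₁, e₂]
  exact hm _ _

lemma exists_margin_addDefect (hp : ContPiecewiseLinear p) (hq : ContPiecewiseLinear q)
    (hpp : Periodic p 1) (hqp : Periodic q 1) (hL : 0 ≤ L)
    (hle : ∀ x y, L * |addDefect q x y| ≤ addDefect p x y)
    (htight : ∀ x y, L * |addDefect q x y| = addDefect p x y → addDefect q x y = 0) :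
    ∃ ε > 0, ∀ x y, (L + ε) * |addDefect q x y| ≤ addDefect p x y := by
  obtain ⟨ε, hε, hK⟩ := (isCompact_Icc.prod isCompact_Icc).exists_pos_forall_of_eventually
    (R := fun ε w => (L + ε) * |addDefect q w.1 w.2| ≤ addDefect p w.1 w.2)
    (fun ε ε' w hε' h => le_trans (by gcongr) h)
    fun v _ => exists_margin_nhds hp hq hL hle htight v
  refine ⟨ε, hε, fun x y => ?_⟩
  have hunit : ∀ z : ℝ, Int.fract z ∈ Set.Icc (0 : ℝ) 1 := fun z =>
    ⟨Int.fract_nonneg z, (Int.fract_lt_one z).le⟩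
  simpa only [hpp.addDefect_fract, hqp.addDefect_fract] using
    hK (Int.fract x, Int.fract y) ⟨hunit x, hunit y⟩

end Margin

section Perturbation

variable {f : ℝ} {π πb : ℝ → ℝ}

lemma map_zero_of_minimalValid_add (hπ : MinimalValid f π)
    (hplus : MinimalValid f (fun x => π x + πb x)) : πb 0 = 0 := by
  have := hplus.map_zero_s15
  linarith [hπ.map_zero_s15]

lemma periodic_of_minimalValid_add (hπ : MinimalValid f π)
    (hplus : MinimalValid f (fun x => π x + πb x)) : Periodic πb 1 := fun x => by
  have := hplus.periodic_s15 x
  linarith [hπ.periodic_s15 x]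

lemma add_map_sub_eq_zero_of_minimalValid_add (hπ : MinimalValid f π)
    (hplus : MinimalValid f (fun x => π x + πb x)) (x : ℝ) : πb x + πb (f - x) = 0 := by
  have := hplus.add_map_sub_eq_one x
  linarith [hπ.add_map_sub_eq_one x]

lemma Pset_subset_add_mul (hplus : MinimalValid f (fun x => π x + πb x))
    (hminus : MinimalValid f (fun x => π x - πb x)) (t : ℝ) :
    Pset f π ⊆ Pset f (fun x => π x + t * πb x) := by
  rintro y ⟨hy, hπy⟩
  change pairing π y = 1 at hπy
  have h₁ := hplus.1.one_le_pairing hy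
  have h₂ := hminus.1.one_le_pairing hy
  rw [pairing_add_left] at h₁
  rw [pairing_sub_left] at h₂
  refine ⟨hy, ?_⟩
  change pairing _ y = 1
  rw [pairing_add_left, pairing_const_mul, hπy, show pairing πb y = 0 by linarith]
  ring

/-- The scalings `ℓ` for which `π ± ℓ πb` stays subadditive. -/
def scaleSet (π πb : ℝ → ℝ) : Set ℝ := {l | ∀ x y, l * |addDefect πb x y| ≤ addDefect π x y}

lemma isClosed_scaleSet : IsClosed (scaleSet π πb) := by
  simp only [scaleSet, Set.ofPred_forall]
  exact isClosed_iInter fun x => isClosed_iInter fun y =>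
    isClosed_le (by fun_prop) continuous_const

lemma one_mem_scaleSet (hplus : MinimalValid f (fun x => π x + πb x))
    (hminus : MinimalValid f (fun x => π x - πb x)) : (1 : ℝ) ∈ scaleSet π πb := fun x y => by
  have h₁ := hplus.subadditive_s15 x y
  have h₂ := hminus.subadditive_s15 x y
  simp only [addDefect, one_mul, abs_le]
  constructor <;> linarith

lemma bddAbove_scaleSet (h : ∃ x y, addDefect πb x y ≠ 0) : BddAbove (scaleSet π πb) := by
  obtain ⟨x, y, hxy⟩ := h
  exact ⟨addDefect π x y / |addDefect πb x y|, fun l hl => (le_div_iff₀ (abs_pos.2 hxy)).2 (hl x y)⟩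

lemma minimalValid_add_mul (hπ : MinimalValid f π) (hplus : MinimalValid f (fun x => π x + πb x))
    (hcpl : ContPiecewiseLinear π) (hcplb : ContPiecewiseLinear πb) {t : ℝ}
    (ht : |t| ∈ scaleSet π πb) : MinimalValid f (fun x => π x + t * πb x) := by
  have hb0 := map_zero_of_minimalValid_add hπ hplus
  have hbper := periodic_of_minimalValid_add hπ hplus
  have h0 : π 0 + t * πb 0 = 0 := by rw [hπ.map_zero_s15, hb0, mul_zero, add_zero]
  have hper : Periodic (fun x => π x + t * πb x) 1 := fun x => by
    simp only [hπ.periodic_s15 x, hbper x]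
  have hsub : ∀ a b, π (a + b) + t * πb (a + b) ≤ (π a + t * πb a) + (π b + t * πb b) :=
    fun a b => by
      have h := addDefect_add_mul π πb t a b
      have hlow : -(|t| * |addDefect πb a b|) ≤ t * addDefect πb a b := by
        rw [← abs_mul]; exact neg_abs_le _
      have := ht a b
      simp only [addDefect] at h hlow this
      linarith
  refine minimalValid_of_subadditive_s15
    (nonneg_of_subadditive_of_periodic (hcpl.2.add (continuous_const.mul hcplb.2)) hper h0 hsub)
    h0 hsub hper fun x => ?_
  have hb : t * πb x + t * πb (f - x) = 0 := by
    rw [← mul_add, add_map_sub_eq_zero_of_minimalValid_add hπ hplus x, mul_zero]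
  linarith [hπ.add_map_sub_eq_one x]

lemma Eset_subset_add_mul {t : ℝ} (ht : |t| ∈ scaleSet π πb) :
    Eset π ⊆ Eset (fun x => π x + t * πb x) := fun p hp => by
  rw [mem_Eset_iff] at hp ⊢
  have h := ht p.1 p.2
  rw [hp, ← abs_mul] at h
  rw [addDefect_add_mul, hp, abs_nonpos_iff.1 h, add_zero]

end Perturbation

section Main

variable {f : ℝ} {π πb : ℝ → ℝ}

lemma addDefect_eq_zero_of_Eset_add_mul_subset {L : ℝ} (hL : 0 < L)
    (hE : ∀ t, |t| = L → Eset (fun x => π x + t * πb x) ⊆ Eset π) {x y : ℝ}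
    (h : L * |addDefect πb x y| = addDefect π x y) : addDefect πb x y = 0 := by
  by_contra hxy
  obtain ⟨t, ht, hcancel⟩ : ∃ t, |t| = L ∧ addDefect π x y + t * addDefect πb x y = 0 := by
    rcases lt_or_gt_of_ne hxy with hneg | hpos
    · exact ⟨L, abs_of_pos hL, by rw [← h, abs_of_neg hneg]; ring⟩
    · exact ⟨-L, by rw [abs_neg, abs_of_pos hL], by rw [← h, abs_of_pos hpos]; ring⟩
  have hmem := hE t ht ((mem_Eset_iff (p := (x, y))).2 (by rwa [addDefect_add_mul]))
  rw [mem_Eset_iff, ← h] at hmem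
  exact hxy (abs_eq_zero.1 ((mul_eq_zero.1 hmem).resolve_left hL.ne'))

/-- At the largest admissible scaling `L`, one of `π ± L πb` gains an additive pair: otherwise
every pair where `L |Δπb| = Δπ` has `Δπb = 0`, and piecewise linearity plus compactness give room
to enlarge `L`. -/
lemma exists_minimalValid_Eset_ssubset (hπ : MinimalValid f π) (hcpl : ContPiecewiseLinear π)
    (hcplb : ContPiecewiseLinear πb) (hne : πb ≠ 0)
    (hplus : MinimalValid f (fun x => π x + πb x))
    (hminus : MinimalValid f (fun x => π x - πb x)) :
    ∃ t, MinimalValid f (fun x => π x + t * πb x) ∧ Eset π ⊂ Eset (fun x => π x + t * πb x) := by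
  have hbper := periodic_of_minimalValid_add hπ hplus
  have hbdd := bddAbove_scaleSet (π := π) <| exists_addDefect_ne_zero hcplb.2 hbper
    (map_zero_of_minimalValid_add hπ hplus) hne
  have hone := one_mem_scaleSet hplus hminus
  set L := sSup (scaleSet π πb)
  have hL : L ∈ scaleSet π πb := isClosed_scaleSet.csSup_mem ⟨1, hone⟩ hbdd
  have hL1 : 1 ≤ L := le_csSup hbdd hone
  have habs : ∀ t, |t| = L → |t| ∈ scaleSet π πb := fun t ht => ht ▸ hL
  by_contra! hno
  have hEq : ∀ t, |t| = L → Eset (fun x => π x + t * πb x) ⊆ Eset π := fun t ht => by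
    by_contra hsub
    exact hno t (minimalValid_add_mul hπ hplus hcpl hcplb (habs t ht))
      ⟨Eset_subset_add_mul (habs t ht), hsub⟩
  have htight : ∀ x y, L * |addDefect πb x y| = addDefect π x y → addDefect πb x y = 0 :=
    fun x y => addDefect_eq_zero_of_Eset_add_mul_subset (by linarith) hEq
  obtain ⟨ε, hε, hmargin⟩ :=
    exists_margin_addDefect hcpl hcplb hπ.periodic_s15 hbper (by linarith) hL htight
  linarith [le_csSup hbdd (show L + ε ∈ scaleSet π πb from hmargin)]

lemma not_isWeakFacet_of_Eset_ssubset {θ : ℝ → ℝ} (hπ : MinimalValid f π)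
    (hθ : MinimalValid f θ) (hP : Pset f π ⊆ Pset f θ) (hE : Eset π ⊂ Eset θ) :
    ¬ IsWeakFacet f π := by
  rintro ⟨-, hweak⟩
  obtain ⟨⟨u, v⟩, hθuv, hπuv⟩ := Set.exists_of_ssubset hE
  set y := Finsupp.single u 1 + Finsupp.single v 1 + Finsupp.single (f - (u + v)) 1
  have hpair : ∀ g, pairing g y = g u + g v + g (f - (u + v)) := fun g => by
    simp [y, pairing_add_right, pairing_single]
  have hy : Feasible f y := feasible_of_pairing_id_eq (by rw [hpair]; simp)
  have hyθ : y ∈ Pset f θ := ⟨hy, by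
    change pairing θ y = 1
    rw [hpair, ← hθ.add_map_sub_eq_one (u + v), ← (hθuv : θ u + θ v = θ (u + v))]⟩
  rw [← hweak θ hθ.1 hP] at hyθ
  have hπy : pairing π y = 1 := hyθ.2
  rw [hpair] at hπy
  exact hπuv (show π u + π v = π (u + v) by linarith [hπ.add_map_sub_eq_one (u + v)])

end Main

theorem stmt15_general (f : ℝ) (π : ℝ → ℝ)
    (hπ : MinimalValid f π) (hcpl : ContPiecewiseLinear π)
    (πb : ℝ → ℝ) (hcplb : ContPiecewiseLinear πb) (hne : πb ≠ 0)
    (hplus : MinimalValid f (fun x => π x + πb x))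
    (hminus : MinimalValid f (fun x => π x - πb x)) :
    (∃ π' : ℝ → ℝ, MinimalValid f π' ∧ Eset π ⊂ Eset π') ∧ ¬ IsWeakFacet f π := by
  obtain ⟨t, hθ, hE⟩ := exists_minimalValid_Eset_ssubset hπ hcpl hcplb hne hplus hminus
  exact ⟨⟨_, hθ, hE⟩,
    not_isWeakFacet_of_Eset_ssubset hπ hθ (Pset_subset_add_mul hplus hminus t) hE⟩

theorem stmt15 (f : ℝ) (hf : f ∈ Set.Ioo (0 : ℝ) 1) (π : ℝ → ℝ)
    (hπ : MinimalValid f π) (hcpl : ContPiecewiseLinear π)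
    (πb : ℝ → ℝ) (hcplb : ContPiecewiseLinear πb) (hne : πb ≠ 0)
    (hplus : MinimalValid f (fun x => π x + πb x))
    (hminus : MinimalValid f (fun x => π x - πb x)) :
    (∃ π' : ℝ → ℝ, MinimalValid f π' ∧ Eset π ⊂ Eset π') ∧ ¬ IsWeakFacet f π :=
  stmt15_general f π hπ hcpl πb hcplb hne hplus hminus
end
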